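/- arXiv:1404.6839 — 5 statements merged into one kernel-verified Lean document; each statement's English description precedes it below -/
import Mathlib

section
/- Let m, n ≥ 2 be integers. For every α ∈ ℝ, the blockwise map φ_α^{[m]} does not preserve positivity on 𝒫^{[m]}_{mn}(ℝ): there exists an mn×mn Hermitian positive semidefinite block matrix H = (H_st)_{s,t=1}^n whose m×m blocks H_st are diagonalizable with real spectrum, such that (φ_α(H_st))_{s,t=1}^n is not positive semidefinite. -/
open scoped Classical ComplexOrder

/-- The `mn × mn` block matrix whose `(s,t)` block is the `m × m` matrix `H s t`. -/
def blockM {m n : ℕ} (H : Fin n → Fin n → Matrix (Fin m) (Fin m) ℂ) :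
    Matrix (Fin n × Fin m) (Fin n × Fin m) ℂ :=
  Matrix.of fun p q => H p.1 q.1 p.2 q.2

/-- `f_α(x) := x^α` for `x ≠ 0`, with the convention `f_α(0) := 0`. -/
noncomputable def fPow (α : ℝ) (x : ℝ) : ℝ := if x = 0 then 0 else x ^ α

/-- `φ_α(x) := |x|^α` for `x ≠ 0`, with `φ_α(0) := 0`. -/
noncomputable def phiPow (α : ℝ) (x : ℝ) : ℝ := if x = 0 then 0 else |x| ^ α

/-- `ψ_α(x) := sgn(x)|x|^α` for `x ≠ 0`, with `ψ_α(0) := 0`. -/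
noncomputable def psiPow (α : ℝ) (x : ℝ) : ℝ := if x = 0 then 0 else Real.sign x * |x| ^ α

/-- Apply a function `f : ℝ → ℂ` to a Hermitian matrix via its spectral decomposition
(junk value `0` on non-Hermitian input). -/
noncomputable def hermFun {m : ℕ} (f : ℝ → ℂ) (B : Matrix (Fin m) (Fin m) ℂ) :
    Matrix (Fin m) (Fin m) ℂ :=
  if hB : B.IsHermitian then
    (hB.eigenvectorUnitary : Matrix (Fin m) (Fin m) ℂ) *
      Matrix.diagonal (fun i => f (hB.eigenvalues i)) *
      (star (hB.eigenvectorUnitary : Matrix (Fin m) (Fin m) ℂ))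
  else 0

/-- `B^α` for a Hermitian matrix `B`, computed via the spectral decomposition of `B`,
with the convention `0^α := 0` on the spectrum. -/
noncomputable def hermPow {m : ℕ} (α : ℝ) (B : Matrix (Fin m) (Fin m) ℂ) :
    Matrix (Fin m) (Fin m) ℂ :=
  hermFun (fun x => ((fPow α x : ℝ) : ℂ)) B

/-- The power function `Ψ_{α,β}` on `ℂ`: `Ψ_{α,β}(r e^{iθ}) := r^α e^{iβθ}` for `r > 0`,
`θ ∈ (-π, π]`, and `Ψ_{α,β}(0) := 0`. -/
noncomputable def Psi (α β : ℝ) (z : ℂ) : ℂ :=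
  if z = 0 then 0
  else ((‖z‖ ^ α : ℝ) : ℂ) * Complex.exp (((β * z.arg : ℝ) : ℂ) * Complex.I)

/-- The 3×3 Hermitian matrix `T(t, θ)` with unit diagonal and off-diagonal entries
`T₁₂ = t₃`, `T₁₃ = t₂ e^{iθ}`, `T₂₃ = t₁`. -/
noncomputable def T3 (t1 t2 t3 θ : ℝ) : Matrix (Fin 3) (Fin 3) ℂ :=
  !![1, (t3 : ℂ), (t2 : ℂ) * Complex.exp ((θ : ℂ) * Complex.I);
     (t3 : ℂ), 1, (t1 : ℂ);
     (t2 : ℂ) * Complex.exp (-(θ : ℂ) * Complex.I), (t1 : ℂ), 1]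

/-!
It suffices to treat `n = m = 2`. A `2 × 2` block counterexample `(P, d)` for `φ_α` extends to
any `n, m ≥ 2`: pad each block by zeros (its eigenvector matrix `P` by the identity, its spectrum
`d` by zeros) and repeat the last block row and column. Since `φ_α(0) = 0`, padding commutes with
`φ_α`; positivity survives the padding, and the original `4 × 4` matrix reappears as a principal
submatrix of the padded one, so the image of the padded matrix still fails to be positive.

For `α ≠ 0` take diagonal blocks `K diag(4, 1) K⁻¹` (`K` the `2 × 2` Hadamard matrix) and
off-diagonal blocks `diag(2, -2)`. Under `φ_α` these become blocks with eigenvalues `4^α, 1` and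
`2^α • 1`, and two test vectors show that positivity would force `2^α = 1`. For `α = 0` take
`[[B Bᴴ, B], [Bᴴ, 1]]` with the idempotent `B = [[1, 1], [0, 0]]`: `φ_0` fixes `B` and `1` but
shrinks `B Bᴴ = diag(2, 0)` to `diag(1, 0)`, which makes the Schur complement indefinite.
-/

namespace Matrix

variable {ι κ R : Type*} [Fintype ι] [DecidableEq κ]

/-- `X` placed on the rows and columns indexed by the image of `e`, zero elsewhere. -/
def padZero [NonAssocSemiring R] (e : ι → κ) (X : Matrix ι ι R) : Matrix κ κ R :=
  (1 : Matrix κ κ R).submatrix id e * X * (1 : Matrix κ κ R).submatrix e id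

section Semiring

variable [Semiring R] {e : ι → κ}

lemma submatrix_padZero (he : e.Injective) (X : Matrix ι ι R) :
    (padZero e X).submatrix e e = X := by
  rw [padZero, submatrix_mul _ _ _ id _ Function.bijective_id,
    submatrix_mul _ _ _ id _ Function.bijective_id]
  simp [submatrix_one _ he]

lemma padZero_mul_padZero [Fintype κ] (he : e.Injective) (X Y : Matrix ι ι R) :
    padZero e X * padZero e Y = padZero e (X * Y) := by
  have h : (1 : Matrix κ κ R).submatrix e id * (1 : Matrix κ κ R).submatrix id e = 1 := by
    rw [← submatrix_mul _ _ _ id _ Function.bijective_id, Matrix.one_mul, submatrix_one _ he]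
  simp only [padZero, Matrix.mul_assoc]
  rw [← Matrix.mul_assoc ((1 : Matrix κ κ R).submatrix e id), h, Matrix.one_mul]

lemma padZero_add (X Y : Matrix ι ι R) : padZero e (X + Y) = padZero e X + padZero e Y := by
  simp only [padZero, Matrix.mul_add, Matrix.add_mul]

lemma diagonal_extend_eq_padZero [DecidableEq ι] (he : e.Injective) (d : ι → R) :
    diagonal (Function.extend e d 0) = padZero e (diagonal d) := by
  ext i j
  simp only [padZero, mul_apply, submatrix_apply, id, one_apply, diagonal_apply]
  by_cases hi : ∃ a, e a = i
  · obtain ⟨a, rfl⟩ := hi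
    rw [Finset.sum_eq_single a (fun b _ hb => by simp [he.eq_iff, Ne.symm hb]) (by simp)]
    simp [he.eq_iff, he.extend_apply, eq_comm]
  · have hi' : ∀ a, e a ≠ i := fun a h => hi ⟨a, h⟩
    simp [hi', Ne.symm (hi' _)]

end Semiring

lemma PosSemidef.padZero [Fintype κ] [CommRing R] [PartialOrder R] [StarRing R]
    [StarOrderedRing R] {X : Matrix ι ι R} (hX : X.PosSemidef) (e : ι → κ) :
    (padZero e X).PosSemidef := by
  simpa [Matrix.padZero, conjTranspose_submatrix] using
    hX.conjTranspose_mul_mul_same ((1 : Matrix κ κ R).submatrix e id)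

section Ring

variable [Ring R] [DecidableEq ι] {e : ι → κ}

/-- `X` placed on the rows and columns indexed by the image of `e`, the identity elsewhere. -/
def padOne (e : ι → κ) (X : Matrix ι ι R) : Matrix κ κ R :=
  1 + padZero e (X - 1)

lemma padOne_one : padOne e (1 : Matrix ι ι R) = 1 := by
  simp [padOne, padZero]

variable [Fintype κ]

lemma padOne_mul_padZero (he : e.Injective) (X Y : Matrix ι ι R) :
    padOne e X * padZero e Y = padZero e (X * Y) := by
  rw [padOne, Matrix.add_mul, Matrix.one_mul, padZero_mul_padZero he, ← padZero_add]
  congr 1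
  noncomm_ring

lemma padZero_mul_padOne (he : e.Injective) (X Y : Matrix ι ι R) :
    padZero e X * padOne e Y = padZero e (X * Y) := by
  rw [padOne, Matrix.mul_add, Matrix.mul_one, padZero_mul_padZero he, ← padZero_add]
  congr 1
  noncomm_ring

lemma padOne_mul_padOne (he : e.Injective) (X Y : Matrix ι ι R) :
    padOne e X * padOne e Y = padOne e (X * Y) := by
  rw [show padOne e X = 1 + padZero e (X - 1) from rfl, Matrix.add_mul, Matrix.one_mul,
    padZero_mul_padOne he, padOne, padOne, add_assoc, ← padZero_add]
  congr 2
  noncomm_ring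

end Ring

section CommRing

variable [CommRing R] [DecidableEq ι] [Fintype κ] {e : ι → κ}

lemma inv_padOne (he : e.Injective) {X : Matrix ι ι R} (hX : IsUnit X) :
    (padOne e X)⁻¹ = padOne e X⁻¹ :=
  inv_eq_right_inv <| by
    rw [padOne_mul_padOne he, mul_nonsing_inv _ ((isUnit_iff_isUnit_det X).mp hX), padOne_one]

lemma _root_.IsUnit.padOne (he : e.Injective) {X : Matrix ι ι R} (hX : IsUnit X) :
    IsUnit (padOne e X) :=
  .of_mul_eq_one _ <| by
    rw [padOne_mul_padOne he, mul_nonsing_inv _ ((isUnit_iff_isUnit_det X).mp hX), padOne_one]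

lemma padOne_mul_padZero_mul_inv (he : e.Injective) {X : Matrix ι ι R} (hX : IsUnit X)
    (Y : Matrix ι ι R) :
    padOne e X * padZero e Y * (padOne e X)⁻¹ = padZero e (X * Y * X⁻¹) := by
  rw [inv_padOne he hX, padOne_mul_padZero he, padZero_mul_padOne he]

end CommRing

end Matrix

open Matrix

section Blockwise

variable {n m n' m' : ℕ}

/-- `f^{[m]}[H]` for the block matrix `H` whose blocks are `P s t * diagonal (d s t) * (P s t)⁻¹`;
`H` itself is `blockwiseFun id P d`. -/
noncomputable def blockwiseFun (f : ℝ → ℝ) (P : Fin n → Fin n → Matrix (Fin m) (Fin m) ℂ)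
    (d : Fin n → Fin n → Fin m → ℝ) : Matrix (Fin n × Fin m) (Fin n × Fin m) ℂ :=
  blockM fun s t => P s t * diagonal (fun i => ((f (d s t i) : ℝ) : ℂ)) * (P s t)⁻¹

def ExistsBlockwiseCounterexample (f : ℝ → ℝ) (n m : ℕ) : Prop :=
  ∃ (P : Fin n → Fin n → Matrix (Fin m) (Fin m) ℂ) (d : Fin n → Fin n → Fin m → ℝ),
    (∀ s t, IsUnit (P s t)) ∧ (blockwiseFun id P d).PosSemidef ∧
      ¬ (blockwiseFun f P d).PosSemidef

lemma blockM_padZero (G : Fin n → Fin n → Matrix (Fin m') (Fin m') ℂ) (e : Fin m' → Fin m) :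
    blockM (fun s t => padZero e (G s t)) = padZero (Prod.map id e) (blockM G) := by
  ext ⟨a, i⟩ ⟨b, j⟩
  simp [blockM, padZero, mul_apply, Fintype.sum_prod_type, one_apply, ite_and]

lemma blockM_submatrix_prodMap (G : Fin n' → Fin n' → Matrix (Fin m) (Fin m) ℂ)
    (r : Fin n → Fin n') :
    (blockM G).submatrix (Prod.map r id) (Prod.map r id) = blockM fun s t => G (r s) (r t) :=
  rfl

lemma blockwiseFun_pad {f : ℝ → ℝ} (hf : f 0 = 0)
    {P : Fin n' → Fin n' → Matrix (Fin m') (Fin m') ℂ} (hP : ∀ a b, IsUnit (P a b))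
    (d : Fin n' → Fin n' → Fin m' → ℝ) (r : Fin n → Fin n') {e : Fin m' → Fin m}
    (he : e.Injective) :
    blockwiseFun f (fun s t => padOne e (P (r s) (r t)))
        (fun s t => Function.extend e (d (r s) (r t)) 0) =
      (padZero (Prod.map id e) (blockwiseFun f P d)).submatrix (Prod.map r id) (Prod.map r id) := by
  rw [blockwiseFun, blockwiseFun, ← blockM_padZero, blockM_submatrix_prodMap]
  congr 1
  funext s t
  have hfd : (fun i => ((f (Function.extend e (d (r s) (r t)) 0 i) : ℝ) : ℂ)) =
      Function.extend e (fun i => ((f (d (r s) (r t) i) : ℝ) : ℂ)) 0 := by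
    ext i
    rw [Function.apply_extend (fun x => ((f x : ℝ) : ℂ))]
    simp only [Function.comp_def, Pi.zero_apply, hf, Complex.ofReal_zero]
    rfl
  rw [hfd, diagonal_extend_eq_padZero he, padOne_mul_padZero_mul_inv he (hP _ _)]

theorem ExistsBlockwiseCounterexample.of_leftInverse {f : ℝ → ℝ}
    (h : ExistsBlockwiseCounterexample f n' m') (hf : f 0 = 0) {r : Fin n → Fin n'}
    {σ : Fin n' → Fin n} (hrσ : Function.LeftInverse r σ) {e : Fin m' → Fin m}
    (he : e.Injective) : ExistsBlockwiseCounterexample f n m := by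
  obtain ⟨P, d, hP, hpsd, hnot⟩ := h
  refine ⟨fun s t => padOne e (P (r s) (r t)), fun s t => Function.extend e (d (r s) (r t)) 0,
    fun s t => (hP _ _).padOne he, ?_, ?_⟩
  · rw [blockwiseFun_pad rfl hP d r he]
    exact (hpsd.padZero _).submatrix _
  · rw [blockwiseFun_pad hf hP d r he]
    refine fun hbig => hnot ?_
    have := hbig.submatrix (Prod.map σ e)
    rwa [submatrix_submatrix, Prod.map_comp_map, hrσ.comp_eq_id, Function.id_comp,
      submatrix_padZero (Function.injective_id.prodMap he)] at this

end Blockwise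

lemma phiPow_apply_zero (α : ℝ) : phiPow α 0 = 0 := if_pos rfl

lemma phiPow_apply_of_ne_zero (α : ℝ) {x : ℝ} (hx : x ≠ 0) : phiPow α x = |x| ^ α := if_neg hx

namespace HadamardExample

lemma inv_hadamard : (!![1, 1; 1, -1] : Matrix (Fin 2) (Fin 2) ℂ)⁻¹ = !![1/2, 1/2; 1/2, -1/2] := by
  refine inv_eq_right_inv ?_
  ext i j
  fin_cases i <;> fin_cases j <;> norm_num

def P : Fin 2 → Fin 2 → Matrix (Fin 2) (Fin 2) ℂ :=
  ![![!![1, 1; 1, -1], 1], ![1, !![1, 1; 1, -1]]]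

def d : Fin 2 → Fin 2 → Fin 2 → ℝ := ![![![4, 1], ![2, -2]], ![![2, -2], ![4, 1]]]

lemma isUnit_P (s t : Fin 2) : IsUnit (P s t) := by
  fin_cases s <;> fin_cases t <;> simp [P, isUnit_iff_isUnit_det, det_fin_two] <;> norm_num

noncomputable def W : Matrix (Fin 2) (Fin 2 × Fin 2) ℂ :=
  of fun r p => ![![![3/2, 1/2], ![3/2, 1/2]], ![![1/2, 3/2], ![-1/2, -3/2]]] r p.1 p.2

lemma blockwiseFun_id_eq_gram : blockwiseFun id P d = Wᴴ * W := by
  ext ⟨s, i⟩ ⟨t, j⟩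
  fin_cases s <;> fin_cases t <;> fin_cases i <;> fin_cases j <;>
    norm_num [blockwiseFun, blockM, P, d, W, inv_hadamard, mul_apply, Fin.sum_univ_two, map_ofNat]

def v₁ : Fin 2 × Fin 2 → ℂ := fun p => ![![1, -1], ![-1, 1]] p.1 p.2

def v₂ : Fin 2 × Fin 2 → ℂ := fun p => ![![1, 1], ![-1, -1]] p.1 p.2

lemma quadForm_v₁ (f : ℝ → ℝ) :
    star v₁ ⬝ᵥ blockwiseFun f P d *ᵥ v₁ = ((4 * f 1 - 2 * (f 2 + f (-2)) : ℝ) : ℂ) := by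
  simp [blockwiseFun, blockM, P, d, v₁, inv_hadamard, mulVec, dotProduct, mul_apply,
    Fin.sum_univ_two, Fintype.sum_prod_type]
  ring

lemma quadForm_v₂ (f : ℝ → ℝ) :
    star v₂ ⬝ᵥ blockwiseFun f P d *ᵥ v₂ = ((4 * f 4 - 2 * (f 2 + f (-2)) : ℝ) : ℂ) := by
  simp [blockwiseFun, blockM, P, d, v₂, inv_hadamard, mulVec, dotProduct, mul_apply,
    Fin.sum_univ_two, Fintype.sum_prod_type]
  ring

end HadamardExample

theorem existsBlockwiseCounterexample_phiPow_of_ne_zero {α : ℝ} (hα : α ≠ 0) :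
    ExistsBlockwiseCounterexample (phiPow α) 2 2 := by
  open HadamardExample in
  refine ⟨P, d, isUnit_P, ?_, fun h => hα ?_⟩
  · rw [blockwiseFun_id_eq_gram]
    exact posSemidef_conjTranspose_mul_self _
  set t := (2 : ℝ) ^ α with ht
  have ht₀ : 0 < t := by positivity
  have hφ₁ : phiPow α 1 = 1 := by simp [phiPow]
  have hφ₂ : phiPow α 2 = t := by simp [phiPow, ht]
  have hφ₂' : phiPow α (-2) = t := by simp [phiPow, ht]
  have hφ₄ : phiPow α 4 = t * t := by
    rw [phiPow_apply_of_ne_zero α (by norm_num), ht, ← Real.mul_rpow (by norm_num) (by norm_num)]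
    norm_num
  have h₁ := h.dotProduct_mulVec_nonneg v₁
  have h₂ := h.dotProduct_mulVec_nonneg v₂
  rw [quadForm_v₁, Complex.zero_le_real, hφ₁, hφ₂, hφ₂'] at h₁
  rw [quadForm_v₂, Complex.zero_le_real, hφ₄, hφ₂, hφ₂'] at h₂
  have ht₁ : t = 2 ^ (0 : ℝ) := by rw [Real.rpow_zero]; nlinarith
  exact (Real.rpow_right_inj (by norm_num) (by norm_num)).mp ht₁

namespace ShearExample

lemma inv_shearUpper : (!![1, -1; 0, 1] : Matrix (Fin 2) (Fin 2) ℂ)⁻¹ = !![1, 1; 0, 1] := by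
  refine inv_eq_right_inv ?_
  ext i j
  fin_cases i <;> fin_cases j <;> simp

lemma inv_shearLower : (!![1, 0; 1, 1] : Matrix (Fin 2) (Fin 2) ℂ)⁻¹ = !![1, 0; -1, 1] := by
  refine inv_eq_right_inv ?_
  ext i j
  fin_cases i <;> fin_cases j <;> simp

/-- The lower shear is `(upper⁻¹)ᴴ`, so that the two off-diagonal blocks are adjoint. -/
def P : Fin 2 → Fin 2 → Matrix (Fin 2) (Fin 2) ℂ :=
  ![![1, !![1, -1; 0, 1]], ![!![1, 0; 1, 1], 1]]

def d : Fin 2 → Fin 2 → Fin 2 → ℝ := ![![![2, 0], ![1, 0]], ![![1, 0], ![1, 1]]]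

lemma isUnit_P (s t : Fin 2) : IsUnit (P s t) := by
  fin_cases s <;> fin_cases t <;> simp [P, isUnit_iff_isUnit_det, det_fin_two]

def W : Matrix (Fin 2) (Fin 2 × Fin 2) ℂ :=
  of fun r p => ![![![1, 0], ![1, 0]], ![![1, 0], ![0, 1]]] r p.1 p.2

lemma blockwiseFun_id_eq_gram : blockwiseFun id P d = Wᴴ * W := by
  ext ⟨s, i⟩ ⟨t, j⟩
  fin_cases s <;> fin_cases t <;> fin_cases i <;> fin_cases j <;>
    norm_num [blockwiseFun, blockM, P, d, W, inv_shearUpper, inv_shearLower, mul_apply,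
      Fin.sum_univ_two]

def v : Fin 2 × Fin 2 → ℂ := fun p => ![![1, 0], ![-1, -1]] p.1 p.2

lemma quadForm_v (f : ℝ → ℝ) :
    star v ⬝ᵥ blockwiseFun f P d *ᵥ v = ((f 2 - 2 * f 1 + 2 * f 0 : ℝ) : ℂ) := by
  simp [blockwiseFun, blockM, P, d, v, inv_shearUpper, inv_shearLower, mulVec, dotProduct,
    mul_apply, Fin.sum_univ_two, Fintype.sum_prod_type]
  ring

end ShearExample

theorem existsBlockwiseCounterexample_phiPow_zero :
    ExistsBlockwiseCounterexample (phiPow 0) 2 2 := by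
  open ShearExample in
  refine ⟨P, d, isUnit_P, ?_, fun h => ?_⟩
  · rw [blockwiseFun_id_eq_gram]
    exact posSemidef_conjTranspose_mul_self _
  have h₀ := h.dotProduct_mulVec_nonneg v
  rw [quadForm_v, Complex.zero_le_real, phiPow_apply_zero,
    phiPow_apply_of_ne_zero 0 (by norm_num : (1 : ℝ) ≠ 0),
    phiPow_apply_of_ne_zero 0 (by norm_num : (2 : ℝ) ≠ 0)] at h₀
  norm_num at h₀

/-- Theorem 1(2): for every `α ∈ ℝ`, the blockwise map `φ_α^{[m]}` fails to preserve
positivity on `mn × mn` positive semidefinite block matrices whose `m × m` blocks are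
diagonalizable with real spectrum.  Diagonalizable blocks with real spectrum are encoded
by explicit eigendecompositions `H s t = P s t * diagonal (d s t) * (P s t)⁻¹`. -/
theorem phi_blockwise_never_preserves_psd (m n : ℕ) (hm : 2 ≤ m) (hn : 2 ≤ n) (α : ℝ) :
    ∃ (P : Fin n → Fin n → Matrix (Fin m) (Fin m) ℂ) (d : Fin n → Fin n → Fin m → ℝ),
      (∀ s t, IsUnit (P s t)) ∧
      (blockM fun s t =>
        P s t * Matrix.diagonal (fun i => ((d s t i : ℝ) : ℂ)) * (P s t)⁻¹).PosSemidef ∧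
      ¬ (blockM fun s t =>
        P s t * Matrix.diagonal (fun i => ((phiPow α (d s t i) : ℝ) : ℂ)) *
          (P s t)⁻¹).PosSemidef := by
  have h₂₂ : ExistsBlockwiseCounterexample (phiPow α) 2 2 := by
    rcases eq_or_ne α 0 with rfl | hα
    · exact existsBlockwiseCounterexample_phiPow_zero
    · exact existsBlockwiseCounterexample_phiPow_of_ne_zero hα
  exact h₂₂.of_leftInverse (phiPow_apply_zero α) (r := fun s => ⟨min s 1, by omega⟩)
    (σ := Fin.castLE hn) (fun a => by ext; simp; omega) (Fin.castLE_injective hm)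
end

section
/- Let m, n ≥ 2 be integers. For α ∈ ℝ, the blockwise map ψ_α^{[m]} preserves positivity on 𝒫^{[m]}_{mn}(ℝ) (i.e., ψ_α^{[m]}[H] is positive semidefinite for every H ∈ 𝒫^{[m]}_{mn}(ℝ)) if and only if α = 1. -/
open scoped Classical ComplexOrder

/-!
For `c ≠ 0` the weighted swap `W = [[0, c⁻¹], [c, 0]]` is diagonalizable with eigenvalues `±1`,
and `Wᴴ W = diag (c², c⁻²)`. Hence the block matrix `[[Wᴴ W, Wᴴ], [W, 1]]` is the Gram matrix of
`(W, 1)`, so it is positive semidefinite, and all of its blocks are diagonalizable with real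
spectrum. A function `f` fixing `0` and `±1` changes only the block `Wᴴ W`, into
`diag (f c², f c⁻²)`, and the `2 × 2` principal minor through the entries `f c²` and `W₁₀ = c`
forces `c² ≤ f c²`. For `ψ_α` this says `x ≤ x ^ α` for every `x > 0`, so `α = 1`. Padding with
zero blocks and zero rows puts the example in every size `m, n ≥ 2`.
-/

open Matrix

section BlockSum

variable {α κ ι R : Type*} (ε : α ⊕ κ ≃ ι)

def blockSum [Zero R] (A : Matrix α α R) (B : Matrix κ κ R) : Matrix ι ι R :=
  reindex ε ε (fromBlocks A 0 0 B)

@[simp]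
lemma blockSum_apply_inl [Zero R] (A : Matrix α α R) (B : Matrix κ κ R) (a b : α) :
    blockSum ε A B (ε (.inl a)) (ε (.inl b)) = A a b := by
  simp [blockSum]

lemma blockSum_mul [Fintype α] [Fintype κ] [Fintype ι] [NonUnitalNonAssocSemiring R]
    (A A' : Matrix α α R) (B B' : Matrix κ κ R) :
    blockSum ε A B * blockSum ε A' B' = blockSum ε (A * A') (B * B') := by
  simp [blockSum, fromBlocks_multiply]

lemma blockSum_one [DecidableEq α] [DecidableEq κ] [DecidableEq ι] [Zero R] [One R] :
    blockSum ε (1 : Matrix α α R) 1 = 1 := by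
  simp [blockSum]

lemma conjTranspose_blockSum [AddMonoid R] [StarAddMonoid R] (A : Matrix α α R)
    (B : Matrix κ κ R) : (blockSum ε A B)ᴴ = blockSum ε Aᴴ Bᴴ := by
  simp [blockSum, fromBlocks_conjTranspose]

lemma blockSum_diagonal [DecidableEq α] [DecidableEq κ] [DecidableEq ι] [Zero R]
    (a : α → R) (b : κ → R) :
    blockSum ε (diagonal a) (diagonal b) = diagonal fun i => Sum.elim a b (ε.symm i) := by
  simp [blockSum]

variable [Fintype α] [Fintype κ] [Fintype ι] [DecidableEq α] [DecidableEq κ] [DecidableEq ι]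
  [CommRing R] {P Q : Matrix α α R}

lemma isUnit_blockSum_one (h : P * Q = 1) : IsUnit (blockSum ε P 1) :=
  isUnit_iff_exists_inv.mpr ⟨blockSum ε Q 1, by rw [blockSum_mul, h, mul_one, blockSum_one]⟩

lemma blockSum_conj_diagonal (h : P * Q = 1) (δ : α → R) :
    blockSum ε P 1 * diagonal (fun i => Sum.elim δ 0 (ε.symm i)) * (blockSum ε P 1)⁻¹ =
      blockSum ε (P * diagonal δ * Q) 0 := by
  rw [inv_eq_right_inv (by rw [blockSum_mul, h, mul_one, blockSum_one] : _ = (1 : Matrix ι ι R)),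
    ← diagonal_zero, ← blockSum_diagonal, blockSum_mul, blockSum_mul]
  simp

end BlockSum

section ExtendBlocks

variable {α κ σ β γ δ : Type*} (ε : α ⊕ κ ≃ σ)

def extendBlocks (T : α → α → β) (z : β) (s t : σ) : β :=
  Sum.elim (fun a => Sum.elim (T a) fun _ => z) (fun _ _ => z) (ε.symm s) (ε.symm t)

@[simp]
lemma extendBlocks_apply_inl (T : α → α → β) (z : β) (a b : α) :
    extendBlocks ε T z (ε (.inl a)) (ε (.inl b)) = T a b := by
  simp [extendBlocks]

lemma extendBlocks_of_forall {p : β → Prop} {T : α → α → β} {z : β} (hT : ∀ a b, p (T a b))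
    (hz : p z) (s t : σ) : p (extendBlocks ε T z s t) := by
  unfold extendBlocks
  rcases ε.symm s with a | a <;> rcases ε.symm t with b | b
  exacts [hT a b, hz, hz, hz]

lemma extendBlocks_map₂ (g : β → γ → δ) (T : α → α → β) (T' : α → α → γ) (z : β) (z' : γ)
    (s t : σ) :
    g (extendBlocks ε T z s t) (extendBlocks ε T' z' s t) =
      extendBlocks ε (fun a b => g (T a b) (T' a b)) (g z z') s t := by
  unfold extendBlocks
  rcases ε.symm s with a | a <;> rcases ε.symm t with b | b <;> rfl

end ExtendBlocks

section Padding

variable {α κ ι β κ' σ R : Type*} [Fintype α] [Fintype κ] [Fintype ι] [DecidableEq κ]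
  [DecidableEq ι] [CommRing R] (εm : α ⊕ κ ≃ ι) (εn : β ⊕ κ' ≃ σ)

lemma extendBlocks_blockSum_conj_diagonal [DecidableEq α] {S : Type*} [Zero S]
    {P Q : β → β → Matrix α α R} (hPQ : ∀ a b, P a b * Q a b = 1) (δ : β → β → α → S)
    {g : S → R} (hg : g 0 = 0) (s t : σ) :
    extendBlocks εn (fun a b => blockSum εm (P a b) 1) 1 s t *
        diagonal (fun i =>
          g (extendBlocks εn (fun a b i => Sum.elim (δ a b) 0 (εm.symm i)) 0 s t i)) *
        (extendBlocks εn (fun a b => blockSum εm (P a b) 1) 1 s t)⁻¹ =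
      extendBlocks εn
        (fun a b => blockSum εm (P a b * diagonal (fun i => g (δ a b i)) * Q a b) 0) 0 s t := by
  rw [extendBlocks_map₂ εn
    (fun (A : Matrix ι ι R) (d : ι → S) => A * diagonal (fun i => g (d i)) * A⁻¹)]
  congr 1
  · funext a b
    have hgδ : ∀ x : α ⊕ κ, g (Sum.elim (δ a b) 0 x) = Sum.elim (fun i => g (δ a b i)) 0 x := by
      rintro (x | x) <;> simp [hg]
    simp only [hgδ, blockSum_conj_diagonal εm (hPQ a b)]
  · simp [hg]

lemma extendBlocks_blockSum_conjTranspose_mul [StarRing R] (X : β → Matrix α α R) (s t : σ) :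
    extendBlocks εn (fun a b => blockSum εm ((X a)ᴴ * X b) 0) 0 s t =
      (Sum.elim (fun a => blockSum εm (X a) 0) 0 (εn.symm s))ᴴ *
        Sum.elim (fun a => blockSum εm (X a) 0) 0 (εn.symm t) := by
  unfold extendBlocks
  rcases εn.symm s with a | a <;> rcases εn.symm t with b | b <;>
    simp [conjTranspose_blockSum, blockSum_mul]

end Padding

lemma posSemidef_blockM_conjTranspose_mul {κ : Type*} [Fintype κ] {m n : ℕ}
    (X : Fin n → Matrix κ (Fin m) ℂ) : (blockM fun s t => (X s)ᴴ * X t).PosSemidef := by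
  convert posSemidef_conjTranspose_mul_self (of fun k (p : Fin n × Fin m) => X p.1 k p.2)
  ext p q
  simp [blockM, mul_apply]

lemma Matrix.PosSemidef.apply_mul_apply_le {𝕜 ι : Type*} [RCLike 𝕜] [Fintype ι] [DecidableEq ι]
    {M : Matrix ι ι 𝕜} (hM : M.PosSemidef) (p q : ι) : M p q * M q p ≤ M p p * M q q := by
  have := (hM.submatrix ![p, q]).det_nonneg
  rw [det_fin_two] at this
  simpa [sub_nonneg] using this

section WeightedSwap

variable {c : ℝ}

noncomputable def weightedSwap (c : ℝ) : Matrix (Fin 2) (Fin 2) ℂ := !![0, (c : ℂ)⁻¹; c, 0]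

def weightedSwapEigvecs (c : ℝ) : Matrix (Fin 2) (Fin 2) ℂ := !![1, 1; c, -c]

noncomputable def weightedSwapEigvecsInv (c : ℝ) : Matrix (Fin 2) (Fin 2) ℂ :=
  !![2⁻¹, (2 * c : ℂ)⁻¹; 2⁻¹, -(2 * c : ℂ)⁻¹]

lemma weightedSwapEigvecs_mul_inv (hc : c ≠ 0) :
    weightedSwapEigvecs c * weightedSwapEigvecsInv c = 1 := by
  have : (c : ℂ) ≠ 0 := by exact_mod_cast hc
  rw [weightedSwapEigvecs, weightedSwapEigvecsInv, mul_fin_two, one_fin_two]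
  congr 2 <;> field_simp <;> norm_num

lemma weightedSwap_eq_conj (hc : c ≠ 0) :
    weightedSwapEigvecs c * diagonal ![1, -1] * weightedSwapEigvecsInv c = weightedSwap c := by
  have : (c : ℂ) ≠ 0 := by exact_mod_cast hc
  rw [weightedSwapEigvecs, weightedSwapEigvecsInv, weightedSwap, diagonal_fin_two, mul_fin_two,
    mul_fin_two]
  congr 2 <;> simp <;> field_simp <;> norm_num

lemma conjTranspose_weightedSwap (c : ℝ) : (weightedSwap c)ᴴ = weightedSwap c⁻¹ := by
  ext i j
  fin_cases i <;> fin_cases j <;> simp [weightedSwap]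

lemma conjTranspose_weightedSwap_mul_self (hc : c ≠ 0) :
    (weightedSwap c)ᴴ * weightedSwap c = diagonal ![((c ^ 2 : ℝ) : ℂ), ((c⁻¹ ^ 2 : ℝ) : ℂ)] := by
  have : (c : ℂ) ≠ 0 := by exact_mod_cast hc
  rw [conjTranspose_weightedSwap, weightedSwap, weightedSwap, mul_fin_two, diagonal_fin_two]
  congr 2 <;> simp <;> field_simp

end WeightedSwap

section TestMatrix

variable {c : ℝ}

noncomputable def testBlocks (c : ℝ) (x y : ℂ) : Fin 2 → Fin 2 → Matrix (Fin 2) (Fin 2) ℂ :=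
  ![![diagonal ![x, y], weightedSwap c⁻¹], ![weightedSwap c, 1]]

noncomputable def testGramFactor (c : ℝ) : Fin 2 → Matrix (Fin 2) (Fin 2) ℂ :=
  ![weightedSwap c, 1]

noncomputable def testEigvecs (c : ℝ) : Fin 2 → Fin 2 → Matrix (Fin 2) (Fin 2) ℂ :=
  ![![1, weightedSwapEigvecs c⁻¹], ![weightedSwapEigvecs c, 1]]

noncomputable def testEigvecsInv (c : ℝ) : Fin 2 → Fin 2 → Matrix (Fin 2) (Fin 2) ℂ :=
  ![![1, weightedSwapEigvecsInv c⁻¹], ![weightedSwapEigvecsInv c, 1]]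

noncomputable def testSpectra (c : ℝ) : Fin 2 → Fin 2 → Fin 2 → ℝ :=
  ![![![c ^ 2, c⁻¹ ^ 2], ![1, -1]], ![![1, -1], ![1, 1]]]

lemma testBlocks_eq_gram (hc : c ≠ 0) (a b : Fin 2) :
    testBlocks c ((c ^ 2 : ℝ) : ℂ) ((c⁻¹ ^ 2 : ℝ) : ℂ) a b =
      (testGramFactor c a)ᴴ * testGramFactor c b := by
  fin_cases a <;> fin_cases b
  · simpa [testBlocks, testGramFactor] using (conjTranspose_weightedSwap_mul_self hc).symm
  all_goals simp [testBlocks, testGramFactor, conjTranspose_weightedSwap]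

lemma testEigvecs_mul_inv (hc : c ≠ 0) (a b : Fin 2) :
    testEigvecs c a b * testEigvecsInv c a b = 1 := by
  fin_cases a <;> fin_cases b <;>
    simp [testEigvecs, testEigvecsInv, weightedSwapEigvecs_mul_inv, hc]

lemma testEigvecs_conj_diagonal (hc : c ≠ 0) {g : ℝ → ℂ} (h1 : g 1 = 1) (hm1 : g (-1) = -1)
    (a b : Fin 2) :
    testEigvecs c a b * diagonal (fun i => g (testSpectra c a b i)) * testEigvecsInv c a b =
      testBlocks c (g (c ^ 2)) (g (c⁻¹ ^ 2)) a b := by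
  have hpm : (fun i => g (![1, -1] i)) = ![1, -1] := by
    funext i
    fin_cases i <;> simp [h1, hm1]
  have hone : (fun i => g (![1, 1] i)) = 1 := by
    funext i
    fin_cases i <;> simp [h1]
  fin_cases a <;> fin_cases b <;>
    simp [testEigvecs, testEigvecsInv, testSpectra, testBlocks, hpm, hone,
      weightedSwap_eq_conj, hc]

end TestMatrix

def PreservesBlockPSD (m n : ℕ) (f : ℝ → ℝ) : Prop :=
  ∀ (P : Fin n → Fin n → Matrix (Fin m) (Fin m) ℂ) (d : Fin n → Fin n → Fin m → ℝ),
    (∀ s t, IsUnit (P s t)) →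
    (blockM fun s t => P s t * diagonal (fun i => ((d s t i : ℝ) : ℂ)) * (P s t)⁻¹).PosSemidef →
    (blockM fun s t =>
      P s t * diagonal (fun i => ((f (d s t i) : ℝ) : ℂ)) * (P s t)⁻¹).PosSemidef

lemma sq_le_apply_sq_of_preservesBlockPSD {m n : ℕ} {κ κ' : Type*} [Fintype κ] [DecidableEq κ]
    (εm : Fin 2 ⊕ κ ≃ Fin m) (εn : Fin 2 ⊕ κ' ≃ Fin n) {f : ℝ → ℝ}
    (hf : PreservesBlockPSD m n f) (h0 : f 0 = 0) (h1 : f 1 = 1) (hm1 : f (-1) = -1)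
    {c : ℝ} (hc : c ≠ 0) : c ^ 2 ≤ f (c ^ 2) := by
  set P := extendBlocks εn (fun a b => blockSum εm (testEigvecs c a b) 1) 1
  set d := extendBlocks εn (fun a b i => Sum.elim (testSpectra c a b) 0 (εm.symm i)) 0
  have hP : ∀ s t, IsUnit (P s t) :=
    extendBlocks_of_forall εn (fun a b => isUnit_blockSum_one εm (testEigvecs_mul_inv hc a b))
      isUnit_one
  have hconj : ∀ g : ℝ → ℂ, g 0 = 0 → g 1 = 1 → g (-1) = -1 → ∀ s t,
      P s t * diagonal (fun i => g (d s t i)) * (P s t)⁻¹ =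
        extendBlocks εn (fun a b => blockSum εm (testBlocks c (g (c ^ 2)) (g (c⁻¹ ^ 2)) a b) 0) 0
          s t := by
    intro g hg0 hg1 hgm1 s t
    rw [extendBlocks_blockSum_conj_diagonal εm εn (testEigvecs_mul_inv hc) _ hg0]
    simp only [testEigvecs_conj_diagonal hc hg1 hgm1]
  have hpsd := hf P d hP (by
    simp only [hconj (fun x => (x : ℂ)) (by simp) (by simp) (by simp), testBlocks_eq_gram hc,
      extendBlocks_blockSum_conjTranspose_mul]
    exact posSemidef_blockM_conjTranspose_mul _)
  simp only [hconj (fun x => (f x : ℂ)) (by simp [h0]) (by simp [h1]) (by simp [hm1])] at hpsd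
  have hminor :=
    hpsd.apply_mul_apply_le (εn (.inl 0), εm (.inl 0)) (εn (.inl 1), εm (.inl 1))
  simp only [blockM, of_apply, extendBlocks_apply_inl, blockSum_apply_inl] at hminor
  simpa [testBlocks, weightedSwap, ← sq, ← Complex.ofReal_pow] using hminor

lemma psiPow_zero (α : ℝ) : psiPow α 0 = 0 := if_pos rfl

lemma psiPow_of_pos (α : ℝ) {x : ℝ} (hx : 0 < x) : psiPow α x = x ^ α := by
  rw [psiPow, if_neg hx.ne', Real.sign_of_pos hx, abs_of_pos hx, one_mul]

lemma psiPow_neg (α x : ℝ) : psiPow α (-x) = -psiPow α x := by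
  unfold psiPow
  split_ifs <;> simp_all [Real.sign_neg]

lemma psiPow_one_left (x : ℝ) : psiPow 1 x = x := by
  rcases lt_trichotomy x 0 with hx | rfl | hx
  · rw [← neg_neg x, psiPow_neg, psiPow_of_pos 1 (neg_pos.mpr hx), Real.rpow_one]
  · exact psiPow_zero 1
  · rw [psiPow_of_pos 1 hx, Real.rpow_one]

lemma eq_one_of_forall_le_rpow {α : ℝ} (h : ∀ x : ℝ, 0 < x → x ≤ x ^ α) : α = 1 := by
  have h2 := h 2 two_pos
  have h12 := h 2⁻¹ (by norm_num)
  conv_lhs at h2 => rw [← Real.rpow_one 2]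
  conv_lhs at h12 => rw [← Real.rpow_one 2⁻¹]
  rw [Real.rpow_le_rpow_left_iff one_lt_two] at h2
  rw [Real.rpow_le_rpow_left_iff_of_base_lt_one (by norm_num) (by norm_num)] at h12
  exact le_antisymm h12 h2

/-- Theorem 1(3): the blockwise map `ψ_α^{[m]}` preserves positivity on `mn × mn`
positive semidefinite block matrices whose `m × m` blocks are diagonalizable with real
spectrum if and only if `α = 1`.  Diagonalizable blocks with real spectrum are encoded by
explicit eigendecompositions `H s t = P s t * diagonal (d s t) * (P s t)⁻¹` (the functional
calculus is independent of the decomposition chosen). -/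
theorem psi_blockwise_preserves_psd_iff (m n : ℕ) (hm : 2 ≤ m) (hn : 2 ≤ n) (α : ℝ) :
    (∀ (P : Fin n → Fin n → Matrix (Fin m) (Fin m) ℂ) (d : Fin n → Fin n → Fin m → ℝ),
      (∀ s t, IsUnit (P s t)) →
      (blockM fun s t =>
        P s t * Matrix.diagonal (fun i => ((d s t i : ℝ) : ℂ)) * (P s t)⁻¹).PosSemidef →
      (blockM fun s t =>
        P s t * Matrix.diagonal (fun i => ((psiPow α (d s t i) : ℝ) : ℂ)) *
          (P s t)⁻¹).PosSemidef) ↔ α = 1 := by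
  change PreservesBlockPSD m n (psiPow α) ↔ α = 1
  constructor
  · intro hf
    refine eq_one_of_forall_le_rpow fun x hx => ?_
    have hx' := sq_le_apply_sq_of_preservesBlockPSD
      (finSumFinEquiv.trans (finCongr (Nat.add_sub_cancel' hm)))
      (finSumFinEquiv.trans (finCongr (Nat.add_sub_cancel' hn))) hf (psiPow_zero α)
      (by rw [psiPow_of_pos α one_pos, Real.one_rpow])
      (by rw [psiPow_neg, psiPow_of_pos α one_pos, Real.one_rpow])
      (Real.sqrt_ne_zero'.mpr hx)
    rwa [Real.sq_sqrt hx.le, psiPow_of_pos α hx] at hx'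
  · rintro rfl P d _ hpsd
    simpa only [psiPow_one_left] using hpsd
end

section
/- Let m, n ≥ 2 be integers and α > 0 with α ∈ ℕ ∪ [n−2,∞). Then for all m×m Hermitian positive semidefinite matrices H_st (1 ≤ s,t ≤ n) that pairwise commute and such that the mn×mn block matrix (H_st)_{s,t=1}^n is positive semidefinite, the block matrix (H_st^α)_{s,t=1}^n is positive semidefinite. -/
open scoped Classical ComplexOrder

/-!
Commuting Hermitian matrices are simultaneously unitarily diagonalizable, `H s t = U Dₛₜ U*`
with `Dₛₜ = diag(λₛₜ(k))ₖ`. Conjugating by `1 ⊗ U` turns the block matrix `(H s t)` into the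
direct sum over `k` of the `n × n` matrices `Λₖ = (λₛₜ(k))ₛₜ`, and `(H s t ^ α)` into the direct
sum of their entrywise powers `Λₖ^∘α`. Each `Λₖ` is positive semidefinite with nonnegative
entries, so everything reduces to the FitzGerald–Horn theorem: for such an `N × N` matrix `A`,
`A^∘α` is positive semidefinite when `α ∈ ℕ` (Schur product theorem) or `α ≥ N - 2`.

For the latter, induct on `N`. Split off a rank-one matrix `ζζᵀ` built from the last column so
that `W = A - ζζᵀ` is positive semidefinite with vanishing last row and column; then
`A^∘α = (ζζᵀ)^∘α + α ∫₀¹ W ∘ (ζζᵀ + tW)^∘(α-1) dt`, and each integrand is the Schur product of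
`W` with a matrix whose leading `(N-1) × (N-1)` block, the only one `W` sees, is positive
semidefinite by induction since `α - 1 ≥ (N - 1) - 2`.
-/

open Matrix Set
open scoped Kronecker

theorem Real.rpow_eq_rpow_add_intervalIntegral {x y α : ℝ} (hα : 1 ≤ α) :
    x ^ α = y ^ α + ∫ t in (0 : ℝ)..1, α * (x - y) * (y + t * (x - y)) ^ (α - 1) := by
  have hderiv : ∀ t ∈ uIcc (0 : ℝ) 1, HasDerivAt (fun t => (y + t * (x - y)) ^ α)
      (α * (x - y) * (y + t * (x - y)) ^ (α - 1)) t := by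
    intro t _
    convert ((hasDerivAt_mul_const (x - y)).const_add y).rpow_const (x := t) (Or.inr hα) using 1
    ring
  have hcont : Continuous fun t : ℝ => α * (x - y) * (y + t * (x - y)) ^ (α - 1) := by
    have : 0 ≤ α - 1 := by linarith
    fun_prop
  rw [intervalIntegral.integral_eq_sub_of_hasDerivAt hderiv (hcont.intervalIntegrable _ _)]
  ring_nf

namespace Matrix

theorem PosSemidef.map_pow {𝕜 ι : Type*} [RCLike 𝕜] [Fintype ι] {A : Matrix ι ι 𝕜}
    (hA : A.PosSemidef) (k : ℕ) : (A.map (· ^ k)).PosSemidef := by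
  induction k with
  | zero => simpa [vecMulVec, Matrix.map] using posSemidef_vecMulVec_self_star (1 : ι → 𝕜)
  | succ k ih =>
    convert ih.hadamard hA using 1
    ext i j
    simp [pow_succ]

theorem PosSemidef.sq_apply_le {ι : Type*} [Fintype ι] {A : Matrix ι ι ℝ}
    (hA : A.PosSemidef) (i j : ι) : A i j ^ 2 ≤ A i i * A j j := by
  have h := (hA.submatrix ![i, j]).det_nonneg
  rw [det_fin_two] at h
  have hji : A j i = A i j := hA.isHermitian.apply i j
  simp only [submatrix_apply, Matrix.cons_val_zero, Matrix.cons_val_one, hji] at h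
  nlinarith

theorem posSemidef_of_fin_two {A : Matrix (Fin 2) (Fin 2) ℝ} (h10 : A 1 0 = A 0 1)
    (h00 : 0 ≤ A 0 0) (h11 : 0 ≤ A 1 1) (hdet : A 0 1 ^ 2 ≤ A 0 0 * A 1 1) : A.PosSemidef := by
  rw [posSemidef_iff_dotProduct_mulVec]
  refine ⟨?_, fun x => ?_⟩
  · ext i j
    fin_cases i <;> fin_cases j <;> simp [h10]
  · simp only [dotProduct, mulVec, Fin.sum_univ_two, star_trivial, h10]
    rcases h00.eq_or_lt with h | h
    · have : A 0 1 = 0 := by nlinarith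
      rw [← h, this]
      nlinarith [mul_nonneg h11 (sq_nonneg (x 1))]
    · nlinarith [sq_nonneg (A 0 0 * x 0 + A 0 1 * x 1),
        mul_nonneg (sub_nonneg.mpr hdet) (sq_nonneg (x 1))]

theorem posSemidef_of_intervalIntegral {ι : Type*} [Fintype ι] {a b : ℝ} (hab : a ≤ b)
    {F : ℝ → Matrix ι ι ℝ} (hcont : ∀ i j, Continuous fun t => F t i j)
    (hF : ∀ t ∈ Icc a b, (F t).PosSemidef) :
    (of fun i j => ∫ t in a..b, F t i j).PosSemidef := by
  rw [posSemidef_iff_dotProduct_mulVec]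
  refine ⟨?_, fun x => ?_⟩
  · ext i j
    refine intervalIntegral.integral_congr fun t ht => ?_
    rw [uIcc_of_le hab] at ht
    exact (hF t ht).isHermitian.apply i j
  · have : star x ⬝ᵥ (of fun i j => ∫ t in a..b, F t i j) *ᵥ x
        = ∫ t in a..b, star x ⬝ᵥ F t *ᵥ x := by
      simp only [dotProduct, mulVec, star_trivial, of_apply]
      rw [intervalIntegral.integral_finsetSum fun i _ =>
        Continuous.intervalIntegrable (by fun_prop) _ _]
      refine Finset.sum_congr rfl fun i _ => ?_
      rw [intervalIntegral.integral_const_mul, intervalIntegral.integral_finsetSum fun j _ =>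
        Continuous.intervalIntegrable (by fun_prop) _ _]
      simp only [intervalIntegral.integral_mul_const]
    rw [this]
    exact intervalIntegral.integral_nonneg hab fun t ht => (hF t ht).dotProduct_mulVec_nonneg x

theorem PosSemidef.exists_sub_vecMulVec {ι : Type*} [Fintype ι] [DecidableEq ι]
    {A : Matrix ι ι ℝ} (hA : A.PosSemidef) (h0 : ∀ i j, 0 ≤ A i j) (k : ι) :
    ∃ ζ : ι → ℝ, (∀ i, 0 ≤ ζ i) ∧ (A - vecMulVec ζ ζ).PosSemidef ∧
      ∀ i, (A - vecMulVec ζ ζ) i k = 0 := by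
  set c := A k k
  have hsymm : ∀ i j, A j i = A i j := fun i j => hA.isHermitian.apply i j
  have hζζ : ∀ i j, A i k / √c * (A j k / √c) = A i k * A j k / c := fun i j => by
    rw [div_mul_div_comm, Real.mul_self_sqrt (h0 k k)]
  refine ⟨fun i => A i k / √c, fun i => div_nonneg (h0 i k) (Real.sqrt_nonneg c), ?_, fun i => ?_⟩
  · -- one step of Gaussian elimination; thanks to `x / 0 = 0` this also covers `c = 0`
    let P : Matrix ι ι ℝ := 1 - vecMulVec (Pi.single k 1) fun j => A k j / c
    convert hA.conjTranspose_mul_mul_same P using 1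
    ext i j
    simp only [P, sub_apply, vecMulVec_apply, hζζ, conjTranspose_eq_transpose_of_trivial,
      transpose_sub, transpose_one, transpose_vecMulVec, sub_mul, one_mul, mul_apply,
      Pi.single_apply, mul_ite, mul_one, mul_zero, ite_mul, zero_mul, Finset.sum_ite_eq',
      Finset.mem_univ, ↓reduceIte, one_apply, mul_sub, Finset.sum_sub_distrib]
    rw [hsymm i k, hsymm j k]
    rcases eq_or_ne c 0 with hc | hc
    · simp [hc]
    · field_simp
      ring
  · rw [sub_apply, vecMulVec_apply, hζζ, mul_div_assoc]
    rcases eq_or_ne c 0 with hc | hc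
    · have : A i k = 0 := by nlinarith [hA.sq_apply_le i k, h0 i i]
      simp [this]
    · rw [div_self hc, mul_one, sub_self]

theorem hadamard_submatrix_comp_castSucc {n : ℕ} {R : Type*} [MulZeroClass R]
    {W : Matrix (Fin (n + 1)) (Fin (n + 1)) R} (hcol : ∀ i, W i (Fin.last n) = 0)
    (hrow : ∀ j, W (Fin.last n) j = 0) (X : Matrix (Fin (n + 1)) (Fin (n + 1)) R)
    {f : Fin (n + 1) → Fin n} (hf : ∀ i, f i.castSucc = i) :
    W ⊙ X.submatrix (Fin.castSucc ∘ f) (Fin.castSucc ∘ f) = W ⊙ X := by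
  ext i j
  induction i using Fin.lastCases with
  | last => simp [hrow]
  | cast i =>
    induction j using Fin.lastCases with
    | last => simp [hcol]
    | cast j => simp [hf]

theorem map_rpow_eq_vecMulVec_add_intervalIntegral {ι : Type*} (A : Matrix ι ι ℝ)
    {ζ : ι → ℝ} (hζ : ∀ i, 0 ≤ ζ i) {α : ℝ} (hα : 1 ≤ α) :
    A.map (· ^ α) = vecMulVec (fun i => ζ i ^ α) (fun i => ζ i ^ α) +
      of fun i j => ∫ t in (0 : ℝ)..1, (α • ((A - vecMulVec ζ ζ) ⊙
        ((1 - t) • vecMulVec ζ ζ + t • A).map (· ^ (α - 1)))) i j := by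
  ext i j
  simp only [map_apply, add_apply, vecMulVec_apply, of_apply, smul_apply, hadamard_apply,
    smul_eq_mul, sub_apply]
  rw [Real.rpow_eq_rpow_add_intervalIntegral (x := A i j) (y := ζ i * ζ j) hα,
    Real.mul_rpow (hζ i) (hζ j)]
  congr 1
  refine intervalIntegral.integral_congr fun t _ => ?_
  ring_nf

theorem PosSemidef.map_rpow_of_forall_map_rpow_sub_one {n : ℕ} {α : ℝ} (hα : 1 ≤ α)
    (ih : ∀ B : Matrix (Fin (n + 1)) (Fin (n + 1)) ℝ, B.PosSemidef → (∀ i j, 0 ≤ B i j) →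
      (B.map (· ^ (α - 1))).PosSemidef)
    {A : Matrix (Fin (n + 2)) (Fin (n + 2)) ℝ} (hA : A.PosSemidef) (h0 : ∀ i j, 0 ≤ A i j) :
    (A.map (· ^ α)).PosSemidef := by
  obtain ⟨ζ, hζ, hW, hWcol⟩ := hA.exists_sub_vecMulVec h0 (Fin.last _)
  have hWrow : ∀ j, (A - vecMulVec ζ ζ) (Fin.last _) j = 0 := fun j => by
    rw [← hW.isHermitian.apply]; exact hWcol j
  have hZ : ∀ β : ℝ, (vecMulVec (fun i => ζ i ^ β) (fun i => ζ i ^ β)).PosSemidef := fun β => by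
    simpa using posSemidef_vecMulVec_self_star fun i => ζ i ^ β
  set M : ℝ → Matrix (Fin (n + 2)) (Fin (n + 2)) ℝ := fun t => (1 - t) • vecMulVec ζ ζ + t • A
  have hM : ∀ t ∈ Icc (0 : ℝ) 1, (M t).PosSemidef ∧ ∀ i j, 0 ≤ M t i j := by
    rintro t ⟨ht0, ht1⟩
    refine ⟨(by simpa using (hZ 1).smul (sub_nonneg.mpr ht1) |>.add (hA.smul ht0)),
      fun i j => ?_⟩
    simp only [M, add_apply, smul_apply, vecMulVec_apply, smul_eq_mul]
    have := mul_nonneg (hζ i) (hζ j)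
    nlinarith [h0 i j]
  have hF : ∀ t ∈ Icc (0 : ℝ) 1,
      (α • ((A - vecMulVec ζ ζ) ⊙ (M t).map (· ^ (α - 1)))).PosSemidef := by
    intro t ht
    -- the last row and column of `A - ζζᵀ` vanish, so only the leading block of `M t` matters
    let f : Fin (n + 2) → Fin (n + 1) := Fin.lastCases (Fin.last n) id
    rw [← hadamard_submatrix_comp_castSucc hWcol hWrow _ (f := f) (by simp [f])]
    exact (hW.hadamard ((ih _ ((hM t ht).1.submatrix _) fun i j => (hM t ht).2 _ _).submatrix
      f)).smul (by linarith)
  have hcont : ∀ i j, Continuous fun t =>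
      (α • ((A - vecMulVec ζ ζ) ⊙ (M t).map (· ^ (α - 1)))) i j := by
    have : 0 ≤ α - 1 := by linarith
    intro i j
    simp only [smul_apply, hadamard_apply, map_apply, add_apply, smul_eq_mul, M]
    fun_prop
  rw [map_rpow_eq_vecMulVec_add_intervalIntegral A hζ hα]
  exact (hZ α).add (posSemidef_of_intervalIntegral zero_le_one hcont hF)

theorem PosSemidef.map_rpow_of_sub_two_le {N : ℕ} {A : Matrix (Fin N) (Fin N) ℝ}
    (hA : A.PosSemidef) (h0 : ∀ i j, 0 ≤ A i j) {α : ℝ} (hα : (N : ℝ) - 2 ≤ α) :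
    (A.map (· ^ α)).PosSemidef := by
  induction N generalizing α with
  | zero => exact Subsingleton.elim (A.map (· ^ α)) 0 ▸ PosSemidef.zero
  | succ N ih =>
    rcases N with _ | N
    · convert PosSemidef.diagonal (d := fun _ => A 0 0 ^ α) fun _ => Real.rpow_nonneg (h0 0 0) α
      ext i j
      fin_cases i; fin_cases j; rfl
    by_cases h1 : 1 ≤ α
    · exact hA.map_rpow_of_forall_map_rpow_sub_one h1
        (fun B hB hB0 => ih hB hB0 (by push_cast at hα ⊢; linarith)) h0
    have hN : (N : ℝ) < 1 := by push_cast at hα; linarith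
    obtain rfl : N = 0 := Nat.lt_one_iff.mp (by exact_mod_cast hN)
    have hα0 : 0 ≤ α := by push_cast at hα; linarith
    have h10 : A 1 0 = A 0 1 := hA.isHermitian.apply 0 1
    refine posSemidef_of_fin_two (by simp [h10])
      (Real.rpow_nonneg (h0 0 0) α) (Real.rpow_nonneg (h0 1 1) α) ?_
    simp only [map_apply]
    rw [sq, ← Real.mul_rpow (h0 0 1) (h0 0 1), ← Real.mul_rpow (h0 0 0) (h0 1 1)]
    exact Real.rpow_le_rpow (mul_nonneg (h0 0 1) (h0 0 1)) (by nlinarith [hA.sq_apply_le 0 1]) hα0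

theorem PosSemidef.exists_eq_conjTranspose_mul_self {𝕜 n : Type*} [RCLike 𝕜] [Fintype n]
    {A : Matrix n n 𝕜} (hA : A.PosSemidef) : ∃ B : Matrix n n 𝕜, A = Bᴴ * B := by
  open scoped MatrixOrder Matrix.Norms.L2Operator in
  exact CStarAlgebra.nonneg_iff_eq_star_mul_self.mp hA.nonneg

theorem posSemidef_map_ofReal_iff {𝕜 n : Type*} [RCLike 𝕜] [Fintype n]
    {A : Matrix n n ℝ} : (A.map ((↑) : ℝ → 𝕜)).PosSemidef ↔ A.PosSemidef := by
  refine ⟨fun h => ?_, fun h => ?_⟩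
  · rw [posSemidef_iff_dotProduct_mulVec] at h ⊢
    refine ⟨?_, fun x => ?_⟩
    · ext i j
      simpa [conjTranspose_apply] using congrFun (congrFun h.1 i) j
    · have hx := h.2 fun i => (x i : 𝕜)
      simp only [dotProduct, mulVec, map_apply, Pi.star_apply, RCLike.star_def,
        RCLike.conj_ofReal, ← RCLike.ofReal_mul, ← RCLike.ofReal_sum] at hx
      simpa [dotProduct, mulVec] using RCLike.ofReal_nonneg.mp hx
  · obtain ⟨B, rfl⟩ := h.exists_eq_conjTranspose_mul_self
    have : (Bᴴ * B).map ((↑) : ℝ → 𝕜) = (B.map (↑))ᴴ * B.map (↑) := by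
      ext i j
      simp [mul_apply, conjTranspose_apply]
    rw [this]
    exact posSemidef_conjTranspose_mul_self _

theorem posSemidef_blockDiagonal_iff {𝕜 n o : Type*} [RCLike 𝕜] [Fintype n] [Fintype o]
    [DecidableEq o] {M : o → Matrix n n 𝕜} :
    (blockDiagonal M).PosSemidef ↔ ∀ k, (M k).PosSemidef := by
  refine ⟨fun h k => ?_, fun h => ?_⟩
  · convert h.submatrix (fun i => (i, k))
    ext i j
    simp
  · choose B hB using fun k => (h k).exists_eq_conjTranspose_mul_self
    rw [funext hB, blockDiagonal_mul, ← blockDiagonal_conjTranspose]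
    exact posSemidef_conjTranspose_mul_self _

theorem exists_orthonormalBasis_forall_mulVec_eq_smul {ι 𝕜 n : Type*} [RCLike 𝕜] [Fintype n]
    (A : ι → Matrix n n 𝕜) (hA : ∀ i, (A i).IsHermitian)
    (hcomm : ∀ i j, Commute (A i) (A j)) :
    ∃ (b : OrthonormalBasis n 𝕜 (EuclideanSpace 𝕜 n)) (d : ι → n → 𝕜),
      ∀ i a, A i *ᵥ b a = d i a • b a := by
  let T : ι → Module.End 𝕜 (EuclideanSpace 𝕜 n) := fun i => toLpLinAlgEquiv 2 (A i)
  have hT : ∀ i, (T i).IsSymmetric := fun i => isSymmetric_toEuclideanLin_iff.mpr (hA i)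
  have hTcomm : Pairwise (Function.onFun Commute T) := fun i j _ => (hcomm i j).map _
  have hV := LinearMap.IsSymmetric.directSum_isInternal_of_pairwise_commute hT hTcomm
  have hV' := LinearMap.IsSymmetric.orthogonalFamily_iInf_eigenspaces hT
  let v := fun χ : ι → 𝕜 => (stdOrthonormalBasis 𝕜 ↥(⨅ j, (T j).eigenspace (χ j))).toBasis
  let b₀ := hV.collectedBasis v
  have hb₀ : Orthonormal 𝕜 b₀ := by
    rw [hV.collectedBasis_coe v]
    have hv : ∀ χ, Orthonormal 𝕜 (v χ) := fun χ => by
      simp only [v, OrthonormalBasis.coe_toBasis]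
      exact (stdOrthonormalBasis 𝕜 _).orthonormal
    simpa using hV'.orthonormal_sigma_orthonormal hv
  let e := b₀.indexEquiv (EuclideanSpace.basisFun n 𝕜).toBasis
  let b := (b₀.reindex e).toOrthonormalBasis (by simpa using hb₀.comp _ e.symm.injective)
  refine ⟨b, fun i a => (e.symm a).1 i, fun i a => ?_⟩
  have hmem := (Submodule.mem_iInf _).mp (hV.collectedBasis_mem v (e.symm a)) i
  rw [Module.End.mem_eigenspace_iff] at hmem
  rw [show b a = b₀ (e.symm a) by simp [b]]
  exact congrArg WithLp.ofLp hmem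

theorem eq_toMatrix_mul_diagonal_mul_star {𝕜 n : Type*} [RCLike 𝕜] [Fintype n] [DecidableEq n]
    {A : Matrix n n 𝕜} (b : OrthonormalBasis n 𝕜 (EuclideanSpace 𝕜 n)) {d : n → 𝕜}
    (hb : ∀ a, A *ᵥ b a = d a • b a) :
    let U := (EuclideanSpace.basisFun n 𝕜).toBasis.toMatrix b.toBasis
    A = U * diagonal d * star U := by
  intro U
  have hU : U * star U = 1 :=
    mem_unitaryGroup_iff.mp ((EuclideanSpace.basisFun n 𝕜).toMatrix_orthonormalBasis_mem_unitary b)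
  have hUe : ∀ k a, U k a = b a k := fun k a => by simp [U, Module.Basis.toMatrix_apply]
  have hAU : A * U = U * diagonal d := by
    ext k a
    have := congrFun (hb a) k
    simp only [mulVec, dotProduct, Pi.smul_apply, smul_eq_mul] at this
    rw [mul_diagonal, hUe]
    simp only [mul_apply, hUe]
    rw [this, mul_comm]
  rw [← hAU, mul_assoc, hU, mul_one]

theorem exists_unitary_forall_eq_mul_diagonal_mul_star {ι 𝕜 n : Type*} [RCLike 𝕜]
    [Fintype n] [DecidableEq n] (A : ι → Matrix n n 𝕜) (hA : ∀ i, (A i).IsHermitian)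
    (hcomm : ∀ i j, Commute (A i) (A j)) :
    ∃ U ∈ unitaryGroup n 𝕜, ∃ d : ι → n → 𝕜, ∀ i, A i = U * diagonal (d i) * star U := by
  obtain ⟨b, d, hb⟩ := exists_orthonormalBasis_forall_mulVec_eq_smul A hA hcomm
  exact ⟨_, (EuclideanSpace.basisFun n 𝕜).toMatrix_orthonormalBasis_mem_unitary b, d,
    fun i => eq_toMatrix_mul_diagonal_mul_star b (hb i)⟩

theorem exists_unitary_forall_eq_mul_diagonal_ofReal_mul_star {ι n : Type*} [Fintype n]
    [DecidableEq n] (A : ι → Matrix n n ℂ) (hA : ∀ i, (A i).PosSemidef)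
    (hcomm : ∀ i j, Commute (A i) (A j)) :
    ∃ U ∈ unitaryGroup n ℂ, ∃ d : ι → n → ℝ, (∀ i k, 0 ≤ d i k) ∧
      ∀ i, A i = U * diagonal (fun k => (d i k : ℂ)) * star U := by
  obtain ⟨U, hU, d, hd⟩ :=
    exists_unitary_forall_eq_mul_diagonal_mul_star A (fun i => (hA i).isHermitian) hcomm
  have hd0 : ∀ i, 0 ≤ d i := fun i => posSemidef_diagonal_iff.mp <|
    (Unitary.isUnit_coe (U := ⟨U, hU⟩)).posSemidef_star_right_conjugate_iff.mp (hd i ▸ hA i)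
  refine ⟨U, hU, fun i k => (d i k).re, fun i k => (Complex.nonneg_iff.mp (hd0 i k)).1,
    fun i => ?_⟩
  rw [hd i]
  congr
  ext k
  exact Complex.eq_re_of_ofReal_le (by rw [Complex.ofReal_zero]; exact hd0 i k)

theorem diagonal_comp_mul_eq_mul_diagonal_comp {n : Type*} [DecidableEq n] [Fintype n]
    {d e : n → ℝ} {X : Matrix n n ℂ}
    (h : diagonal (fun i => (e i : ℂ)) * X = X * diagonal (fun i => (d i : ℂ))) (f : ℝ → ℂ) :
    diagonal (f ∘ e) * X = X * diagonal (f ∘ d) := by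
  ext i j
  have hij := congrFun (congrFun h i) j
  simp only [diagonal_mul, mul_diagonal, Function.comp_apply] at hij ⊢
  rcases eq_or_ne (X i j) 0 with hX | hX
  · simp [hX]
  · rw [mul_comm (X i j)] at hij
    rw [mul_comm (X i j), Complex.ofReal_injective (mul_right_cancel₀ hX hij)]

end Matrix

theorem hermFun_mul_diagonal_mul_star {m : ℕ} (f : ℝ → ℂ) {U : Matrix (Fin m) (Fin m) ℂ}
    (hU : U ∈ unitaryGroup (Fin m) ℂ) (d : Fin m → ℝ) :
    hermFun f (U * diagonal (fun i => (d i : ℂ)) * star U) = U * diagonal (f ∘ d) * star U := by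
  have hB : (U * diagonal (fun i => (d i : ℂ)) * star U).IsHermitian :=
    isHermitian_mul_mul_conjTranspose U <| isHermitian_diagonal_of_self_adjoint _ <|
      funext fun i => Complex.conj_ofReal (d i)
  have hspec := hB.spectral_theorem
  rw [hermFun, dif_pos hB]
  rw [Unitary.conjStarAlgAut_apply] at hspec
  generalize hB.eigenvalues = e at hspec ⊢
  generalize hB.eigenvectorUnitary = W at hspec ⊢
  obtain ⟨V, hV⟩ := W
  dsimp only at hspec ⊢
  have hVV : star V * V = 1 := mem_unitaryGroup_iff'.mp hV
  have hVV' : V * star V = 1 := mem_unitaryGroup_iff.mp hV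
  have hUU : star U * U = 1 := mem_unitaryGroup_iff'.mp hU
  have hUU' : U * star U = 1 := mem_unitaryGroup_iff.mp hU
  have hX : diagonal (fun i => (e i : ℂ)) * (star V * U)
      = (star V * U) * diagonal (fun i => (d i : ℂ)) := by
    calc _ = star V * (V * diagonal (fun i => (e i : ℂ)) * star V) * U := by
          simp only [← Matrix.mul_assoc, hVV, Matrix.one_mul]
      _ = star V * (U * diagonal (fun i => (d i : ℂ)) * star U) * U := by
          rw [hspec]; rfl
      _ = _ := by simp only [Matrix.mul_assoc, hUU, Matrix.mul_one]
  -- `V* U` intertwines the two diagonal forms, hence also their images under `f`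
  have hfX := diagonal_comp_mul_eq_mul_diagonal_comp hX f
  calc V * diagonal (fun i => f (e i)) * star V
      = V * (diagonal (f ∘ e) * (star V * U)) * star U := by
        simp only [Matrix.mul_assoc, hUU', Matrix.mul_one]; rfl
    _ = U * diagonal (f ∘ d) * star U := by
        rw [hfX]; simp only [← Matrix.mul_assoc, hVV', Matrix.one_mul]

theorem fPow_eq_rpow {α : ℝ} (hα : α ≠ 0) (x : ℝ) : fPow α x = x ^ α := by
  unfold fPow
  split_ifs with hx
  · rw [hx, Real.zero_rpow hα]
  · rfl

theorem hermPow_mul_diagonal_mul_star {m : ℕ} {α : ℝ} (hα : α ≠ 0)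
    {U : Matrix (Fin m) (Fin m) ℂ} (hU : U ∈ unitaryGroup (Fin m) ℂ) (d : Fin m → ℝ) :
    hermPow α (U * diagonal (fun i => (d i : ℂ)) * star U) =
      U * diagonal (fun i => ((d i ^ α : ℝ) : ℂ)) * star U := by
  rw [hermPow, hermFun_mul_diagonal_mul_star _ hU]
  simp only [Function.comp_def, fPow_eq_rpow hα]

theorem blockM_mul_mul_star {m n : ℕ} (U : Matrix (Fin m) (Fin m) ℂ)
    (D : Fin n → Fin n → Matrix (Fin m) (Fin m) ℂ) :
    blockM (fun s t => U * D s t * star U) =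
      ((1 : Matrix (Fin n) (Fin n) ℂ) ⊗ₖ U) * blockM D * star (1 ⊗ₖ U) := by
  ext ⟨s, i⟩ ⟨t, j⟩
  simp [blockM, mul_apply, one_apply, Fintype.sum_prod_type, star_eq_conjTranspose,
    conjTranspose_apply, apply_ite (starRingEnd ℂ)]

theorem blockM_diagonal {m n : ℕ} (e : Fin n → Fin n → Fin m → ℂ) :
    blockM (fun s t => diagonal (e s t)) = blockDiagonal fun k => of fun s t => e s t k := by
  ext ⟨s, i⟩ ⟨t, j⟩
  simp [blockM, blockDiagonal_apply, diagonal_apply]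

theorem blockM_mul_diagonal_mul_star_posSemidef_iff {m n : ℕ} {U : Matrix (Fin m) (Fin m) ℂ}
    (hU : U ∈ unitaryGroup (Fin m) ℂ) (Λ : Fin m → Matrix (Fin n) (Fin n) ℝ) :
    (blockM fun s t => U * diagonal (fun k => (Λ k s t : ℂ)) * star U).PosSemidef ↔
      ∀ k, (Λ k).PosSemidef := by
  have hK : IsUnit ((1 : Matrix (Fin n) (Fin n) ℂ) ⊗ₖ U) :=
    Unitary.isUnit_coe (U := ⟨_, kronecker_mem_unitary (one_mem _) hU⟩)
  rw [blockM_mul_mul_star, hK.posSemidef_star_right_conjugate_iff, blockM_diagonal,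
    posSemidef_blockDiagonal_iff]
  exact forall_congr' fun k => posSemidef_map_ofReal_iff

theorem blockwise_power_commuting_psd_general (m n : ℕ)
    (α : ℝ) (hα : 0 < α)
    (hmem : (∃ k : ℕ, 1 ≤ k ∧ α = k) ∨ (n : ℝ) - 2 ≤ α)
    (H : Fin n → Fin n → Matrix (Fin m) (Fin m) ℂ)
    (hpsd : ∀ s t, (H s t).PosSemidef)
    (hcomm : ∀ s t s' t', Commute (H s t) (H s' t'))
    (hblock : (blockM H).PosSemidef) :
    (blockM fun s t => hermPow α (H s t)).PosSemidef := by
  obtain ⟨U, hU, d, hd0, hd⟩ := exists_unitary_forall_eq_mul_diagonal_ofReal_mul_star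
    (fun p : Fin n × Fin n => H p.1 p.2) (fun p => hpsd p.1 p.2) fun p q => hcomm p.1 p.2 q.1 q.2
  let Λ : Fin m → Matrix (Fin n) (Fin n) ℝ := fun k => of fun s t => d (s, t) k
  have hH : H = fun s t => U * diagonal (fun k => (Λ k s t : ℂ)) * star U :=
    funext₂ fun s t => hd (s, t)
  have hΛ : ∀ k, (Λ k).PosSemidef :=
    (blockM_mul_diagonal_mul_star_posSemidef_iff hU Λ).mp (hH ▸ hblock)
  have hΛα : ∀ k, ((Λ k).map (· ^ α)).PosSemidef := fun k => by
    rcases hmem with ⟨j, -, rfl⟩ | hα'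
    · simpa [Real.rpow_natCast] using (hΛ k).map_pow j
    · exact (hΛ k).map_rpow_of_sub_two_le (fun s t => hd0 (s, t) k) hα'
  have hpow : (fun s t => hermPow α (H s t)) =
      fun s t => U * diagonal (fun k => ((Λ k s t ^ α : ℝ) : ℂ)) * star U := by
    rw [hH]
    exact funext₂ fun s t => hermPow_mul_diagonal_mul_star hα.ne' hU _
  rw [hpow]
  exact (blockM_mul_diagonal_mul_star_posSemidef_iff hU fun k => (Λ k).map (· ^ α)).mpr hΛα

/-- Theorem 2, positive part: if `α > 0` lies in `ℕ ∪ [n-2, ∞)`, then the blockwise power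
map preserves positivity on positive semidefinite block matrices with pairwise commuting
positive semidefinite `m × m` blocks. -/
theorem blockwise_power_commuting_psd (m n : ℕ) (hm : 2 ≤ m) (hn : 2 ≤ n)
    (α : ℝ) (hα : 0 < α)
    (hmem : (∃ k : ℕ, 1 ≤ k ∧ α = k) ∨ (n : ℝ) - 2 ≤ α)
    (H : Fin n → Fin n → Matrix (Fin m) (Fin m) ℂ)
    (hpsd : ∀ s t, (H s t).PosSemidef)
    (hcomm : ∀ s t s' t', Commute (H s t) (H s' t'))
    (hblock : (blockM H).PosSemidef) :
    (blockM fun s t => hermPow α (H s t)).PosSemidef :=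
  blockwise_power_commuting_psd_general m n α hα hmem H hpsd hcomm hblock
end

section
/- Let n ≥ 3 be an integer and α > 1 a real number. If the entrywise map A ↦ (Ψ_{α−1,1}(a_st)) sends every (n−1)×(n−1) Hermitian positive semidefinite complex matrix to a positive semidefinite matrix, then the entrywise map A ↦ (Ψ_{α,0}(a_st)) sends every n×n Hermitian positive semidefinite complex matrix to a positive semidefinite matrix. -/
open scoped Classical ComplexOrder

/-!
FitzGerald–Horn argument. Split `A = ξ ξ* + C` with `C ⪰ 0` vanishing on the last row and
column (a Schur complement), and follow `B t = ξ ξ* + t C` from `t = 0` to `t = 1`. At `t = 0`,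
`|B 0|^{∘α}` is the rank-one matrix `w w*` with `w = |ξ|^α`. The `t`-derivative of
`x* |B t|^{∘α} x` is `α x* Re(conj Ψ_{α-1,1}[B t] ∘ C) x`; since `C` is supported on the leading
`(n-1) × (n-1)` block, where `Ψ_{α-1,1}[B t] ⪰ 0` by hypothesis, the Schur product theorem
makes this derivative nonnegative.
-/

open Matrix ComplexConjugate

namespace Matrix

variable {n : Type*} {𝕜 : Type*} [RCLike 𝕜]

lemma PosSemidef.map_conj {M : Matrix n n 𝕜} (hM : M.PosSemidef) :
    (M.map conj).PosSemidef := by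
  have : M.map conj = Mᵀ := by
    ext i j
    simp [← hM.1.apply j i]
  exact this ▸ hM.transpose

lemma PosSemidef.map_re {M : Matrix n n 𝕜} (hM : M.PosSemidef) :
    (M.map fun z => (RCLike.re z : 𝕜)).PosSemidef := by
  have : M.map (fun z => (RCLike.re z : 𝕜)) = (2⁻¹ : ℝ) • (M + M.map conj) := by
    ext i j
    simp only [map_apply, add_apply, smul_apply, RCLike.re_eq_add_conj,
      RCLike.real_smul_eq_coe_mul, RCLike.ofReal_inv, RCLike.ofReal_ofNat]
    ring
  exact this ▸ (hM.add hM.map_conj).smul (by norm_num)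

lemma posSemidef_of_submatrix_castSucc {m : ℕ} {M : Matrix (Fin (m + 1)) (Fin (m + 1)) 𝕜}
    (hrow : ∀ j, M (Fin.last m) j = 0) (hcol : ∀ i, M i (Fin.last m) = 0)
    (hM : (M.submatrix Fin.castSucc Fin.castSucc).PosSemidef) : M.PosSemidef := by
  refine .of_dotProduct_mulVec_nonneg ?_ fun x => ?_
  · ext i j
    induction i using Fin.lastCases <;> induction j using Fin.lastCases <;>
      simp [hrow, hcol]
    exact hM.1.apply _ _
  · simpa [dotProduct, mulVec, Fin.sum_univ_castSucc, hrow, hcol] using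
      hM.dotProduct_mulVec_nonneg (x ∘ Fin.castSucc)

variable [Fintype n]

lemma IsHermitian.posSemidef_of_re_nonneg {M : Matrix n n 𝕜} (hM : M.IsHermitian)
    (h : ∀ x, 0 ≤ RCLike.re (star x ⬝ᵥ M *ᵥ x)) : M.PosSemidef :=
  .of_dotProduct_mulVec_nonneg hM fun x =>
    RCLike.nonneg_iff.2 ⟨h x, hM.im_star_dotProduct_mulVec_self x⟩

lemma IsHermitian.star_dotProduct_mulVec_comm {A : Matrix n n 𝕜} (hA : A.IsHermitian)
    (x y : n → 𝕜) : star x ⬝ᵥ A *ᵥ y = conj (star y ⬝ᵥ A *ᵥ x) := by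
  rw [star_dotProduct, star_mulVec, hA.eq, ← dotProduct_mulVec]
  rfl

lemma PosSemidef.sub_smul_vecMulVec_mulVec {A : Matrix n n 𝕜} (hA : A.PosSemidef)
    {v : n → 𝕜} {r : ℝ} (hr : 0 < r) (hrv : (r : 𝕜) = star v ⬝ᵥ A *ᵥ v) :
    (A - r⁻¹ • vecMulVec (A *ᵥ v) (star (A *ᵥ v))).PosSemidef := by
  refine .of_dotProduct_mulVec_nonneg
    (hA.1.sub ((posSemidef_vecMulVec_self_star _).smul (inv_nonneg.2 hr.le)).1) fun x => ?_
  obtain ⟨L, hL⟩ : ∃ L, star v ⬝ᵥ A *ᵥ x = L := ⟨_, rfl⟩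
  have hxw : star x ⬝ᵥ A *ᵥ v = conj L := hL ▸ hA.1.star_dotProduct_mulVec_comm x v
  have hwx : star (A *ᵥ v) ⬝ᵥ x = L := by
    rw [star_dotProduct, hxw, RCLike.star_def, RCLike.conj_conj]
  have hr0 : (r : 𝕜) ≠ 0 := RCLike.ofReal_ne_zero.2 hr.ne'
  have key : star x ⬝ᵥ (A - r⁻¹ • vecMulVec (A *ᵥ v) (star (A *ᵥ v))) *ᵥ x =
      star (x - (L / r) • v) ⬝ᵥ A *ᵥ (x - (L / r) • v) := by
    simp only [sub_mulVec, smul_mulVec, vecMulVec_mulVec, star_sub, star_smul, mulVec_sub,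
      mulVec_smul, sub_dotProduct, dotProduct_sub, smul_dotProduct, dotProduct_smul,
      smul_eq_mul, hxw, hwx, hL, ← hrv, MulOpposite.smul_eq_mul_unop, MulOpposite.unop_op,
      RCLike.real_smul_eq_coe_mul, RCLike.star_def, map_div₀, RCLike.conj_ofReal,
      RCLike.ofReal_inv]
    field_simp
    ring
  exact key ▸ hA.dotProduct_mulVec_nonneg _

lemma PosSemidef.exists_sub_vecMulVec_mulVec_eq_zero {A : Matrix n n 𝕜} (hA : A.PosSemidef)
    (v : n → 𝕜) : ∃ ξ : n → 𝕜,
      (A - vecMulVec ξ (star ξ)).PosSemidef ∧ (A - vecMulVec ξ (star ξ)) *ᵥ v = 0 := by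
  rcases (hA.dotProduct_mulVec_nonneg v).eq_or_lt with ha | ha
  · exact ⟨0, by simpa using hA, by simpa using (hA.dotProduct_mulVec_zero_iff v).1 ha.symm⟩
  obtain ⟨r, hr, hrv⟩ := RCLike.pos_iff_exists_ofReal.1 ha
  have hξ : vecMulVec (((√r)⁻¹ : ℝ) • (A *ᵥ v)) (star (((√r)⁻¹ : ℝ) • (A *ᵥ v))) =
      r⁻¹ • vecMulVec (A *ᵥ v) (star (A *ᵥ v)) := by
    ext i j
    have hsqrt : (((√r)⁻¹ : ℝ) : 𝕜) * ((√r)⁻¹ : ℝ) = (r⁻¹ : ℝ) := by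
      rw [← Real.sqrt_inv]; exact_mod_cast Real.mul_self_sqrt (inv_nonneg.2 hr.le)
    simp only [vecMulVec_apply, star_smul, Pi.smul_apply, smul_apply, RCLike.real_smul_eq_coe_mul,
      star_trivial]
    linear_combination ((A *ᵥ v) i * star (A *ᵥ v) j) * hsqrt
  have hwv : star (A *ᵥ v) ⬝ᵥ v = r := by
    rw [star_dotProduct, ← hrv, RCLike.star_def, RCLike.conj_ofReal]
  refine ⟨((√r)⁻¹ : ℝ) • (A *ᵥ v), hξ ▸ hA.sub_smul_vecMulVec_mulVec hr hrv, ?_⟩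
  rw [hξ, sub_mulVec, smul_mulVec, vecMulVec_mulVec, hwv]
  ext i
  simp [hr.ne']

end Matrix

lemma Psi_zero_eq_norm_rpow {α : ℝ} (hα : 0 < α) (z : ℂ) : Psi α 0 z = (‖z‖ ^ α : ℝ) := by
  by_cases hz : z = 0 <;> simp [Psi, hz, Real.zero_rpow hα.ne']

lemma Psi_one_eq_norm_rpow_mul (β : ℝ) (z : ℂ) : Psi β 1 z = (‖z‖ ^ (β - 1) : ℝ) * z := by
  by_cases hz : z = 0
  · simp [Psi, hz]
  have hnorm : ‖z‖ ≠ 0 := norm_ne_zero_iff.2 hz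
  have hpow : ‖z‖ ^ β = ‖z‖ ^ (β - 1) * ‖z‖ := by
    rw [Real.rpow_sub_one hnorm]; field_simp
  simp only [Psi, hz, if_false, one_mul, hpow, Complex.ofReal_mul]
  linear_combination ((‖z‖ ^ (β - 1) : ℝ) : ℂ) * Complex.norm_mul_exp_arg_mul_I z

lemma hasDerivAt_norm_add_smul_rpow {α : ℝ} (hα : 1 < α) (b c : ℂ) (t : ℝ) :
    HasDerivAt (fun s : ℝ => ‖b + s • c‖ ^ α)
      (α * (conj (Psi (α - 1) 1 (b + t • c)) * c).re) t := by
  have hline : HasDerivAt (fun s : ℝ => b + s • c) c t := by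
    simpa using ((hasDerivAt_id t).smul_const c).const_add b
  refine ((hasFDerivAt_norm_rpow (b + t • c) hα).comp_hasDerivAt t hline).congr_deriv ?_
  simp [Psi_one_eq_norm_rpow_mul, Complex.inner, sub_sub, one_add_one_eq_two]
  ring

lemma hasDerivAt_star_dotProduct_mulVec {n : Type*} [Fintype n] {𝕜 : Type*}
    [NontriviallyNormedField 𝕜] {R : Type*} [NormedCommRing R] [NormedAlgebra 𝕜 R] [Star R]
    {G : 𝕜 → Matrix n n R} {G' : Matrix n n R} {t : 𝕜} (x : n → R)
    (hG : ∀ i j, HasDerivAt (fun s => G s i j) (G' i j) t) :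
    HasDerivAt (fun s => star x ⬝ᵥ G s *ᵥ x) (star x ⬝ᵥ G' *ᵥ x) t := by
  simp only [dotProduct, mulVec]
  exact .fun_sum fun i _ => .const_mul _ (.fun_sum fun j _ => (hG i j).mul_const _)

lemma hasDerivAt_star_dotProduct_map_Psi_add_smul {n : Type*} [Fintype n] {α : ℝ} (hα : 1 < α)
    (B C : Matrix n n ℂ) (x : n → ℂ) (t : ℝ) :
    HasDerivAt (fun s : ℝ => star x ⬝ᵥ (B + s • C).map (Psi α 0) *ᵥ x)
      (star x ⬝ᵥ (α • (((B + t • C).map (Psi (α - 1) 1)).map conj ⊙ C).map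
        fun z => (z.re : ℂ)) *ᵥ x) t := by
  refine hasDerivAt_star_dotProduct_mulVec x fun i j => ?_
  simpa [Psi_zero_eq_norm_rpow (zero_lt_one.trans hα), mul_add] using
    (hasDerivAt_norm_add_smul_rpow hα (B i j) (C i j) t).ofReal_comp

theorem Matrix.PosSemidef.map_Psi_zero {m : ℕ} {A : Matrix (Fin (m + 1)) (Fin (m + 1)) ℂ}
    (hA : A.PosSemidef) {α : ℝ} (hα : 1 < α)
    (h : ∀ A : Matrix (Fin m) (Fin m) ℂ, A.PosSemidef → (A.map (Psi (α - 1) 1)).PosSemidef) :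
    (A.map (Psi α 0)).PosSemidef := by
  have hα0 : 0 < α := zero_lt_one.trans hα
  obtain ⟨ξ, hC, hCv⟩ := hA.exists_sub_vecMulVec_mulVec_eq_zero (Pi.single (Fin.last m) 1)
  set P := vecMulVec ξ (star ξ)
  set C := A - P
  have hcol : ∀ i, C i (Fin.last m) = 0 := by simpa [mulVec_single_one] using congrFun hCv
  have hrow : ∀ j, C (Fin.last m) j = 0 := fun j => by rw [← hC.1.apply, hcol, star_zero]
  have hW : ∀ t : ℝ, 0 ≤ t →
      (((P + t • C).map (Psi (α - 1) 1)).map conj ⊙ C).PosSemidef := fun t ht =>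
    posSemidef_of_submatrix_castSucc (by simp [hrow]) (by simp [hcol])
      ((h _ (((posSemidef_vecMulVec_self_star ξ).add (hC.smul ht)).submatrix
        Fin.castSucc)).map_conj.hadamard (hC.submatrix Fin.castSucc))
  refine (hA.1.map _ fun z => ?_).posSemidef_of_re_nonneg fun x => ?_
  · simp [Psi_zero_eq_norm_rpow hα0]
  set f : ℝ → ℝ := fun t => (star x ⬝ᵥ (P + t • C).map (Psi α 0) *ᵥ x).re
  have hf : ∀ t, HasDerivAt f _ t := fun t =>
    Complex.reCLM.hasFDerivAt.comp_hasDerivAt t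
      (hasDerivAt_star_dotProduct_map_Psi_add_smul hα P C x t)
  have hmono : MonotoneOn f (Set.Icc 0 1) :=
    monotoneOn_of_hasDerivWithinAt_nonneg (convex_Icc 0 1)
      (fun t _ => (hf t).continuousAt.continuousWithinAt) (fun t _ => (hf t).hasDerivWithinAt)
      fun t ht => ((hW t (interior_subset ht).1).map_re.smul hα0.le).re_dotProduct_nonneg x
  have hf0 : 0 ≤ f 0 := by
    have : P.map (Psi α 0) = vecMulVec (fun i => ((‖ξ i‖ ^ α : ℝ) : ℂ))
        (star fun i => ((‖ξ i‖ ^ α : ℝ) : ℂ)) := by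
      ext i j
      simp [P, vecMulVec_apply, Psi_zero_eq_norm_rpow hα0, Real.mul_rpow]
    simpa [f, this] using (posSemidef_vecMulVec_self_star _).re_dotProduct_nonneg x
  simpa [f, C] using hf0.trans (hmono (by simp) (by simp) zero_le_one)

theorem Psi_induction_step_general (n : ℕ) (α : ℝ) (hα : 1 < α)
    (h : ∀ A : Matrix (Fin (n - 1)) (Fin (n - 1)) ℂ, A.PosSemidef →
      (A.map (Psi (α - 1) 1)).PosSemidef) :
    ∀ A : Matrix (Fin n) (Fin n) ℂ, A.PosSemidef → (A.map (Psi α 0)).PosSemidef := by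
  intro A hA
  cases n with
  | zero => exact Subsingleton.elim (A.map (Psi α 0)) 0 ▸ .zero
  | succ m => exact hA.map_Psi_zero hα h

/-- Proposition: if the entrywise map `Ψ_{α-1,1}` preserves positivity on
`(n-1) × (n-1)` Hermitian positive semidefinite matrices, then the entrywise map
`Ψ_{α,0}` preserves positivity on `n × n` Hermitian positive semidefinite matrices. -/
theorem Psi_induction_step (n : ℕ) (hn : 3 ≤ n) (α : ℝ) (hα : 1 < α)
    (h : ∀ A : Matrix (Fin (n - 1)) (Fin (n - 1)) ℂ, A.PosSemidef →
      (A.map (Psi (α - 1) 1)).PosSemidef) :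
    ∀ A : Matrix (Fin n) (Fin n) ℂ, A.PosSemidef → (A.map (Psi α 0)).PosSemidef :=
  Psi_induction_step_general n α hα h
end

section
/- Let α ∈ ℝ and β ∈ ℤ. The entrywise map A = (a_st) ↦ (Ψ_{α,β}(a_st)) sends every 3×3 Hermitian positive semidefinite complex matrix to a positive semidefinite matrix, if and only if for every t = (t_1,t_2,t_3) ∈ [0,1]³ and every θ ∈ (−3π,3π) satisfying 1 − t_1² − t_2² − t_3² + 2 t_1 t_2 t_3 cos θ ≥ 0, the matrix T((f_α(t_1), f_α(t_2), f_α(t_3)), βθ) is positive semidefinite. -/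
open scoped Classical ComplexOrder

/-!
For integer `β`, `Ψ_{α,β}(z) = |z|^α (z/|z|)^β` is multiplicative and commutes with complex
conjugation, so entrywise application of `Ψ` commutes with diagonal congruence:
`Ψ[D M D*] = Ψ[D] Ψ[M] Ψ[D]*`. Every 3×3 positive semidefinite `A` is a diagonal congruence
`D T(t,θ) D*` of a positive semidefinite `T(t,θ)`: scale `A` to unit diagonal, then move the
phases of the off-diagonal entries into the `(1,3)` entry, which leaves
`θ = arg a₁₃ - arg a₁₂ - arg a₂₃ ∈ (-3π, 3π)`. Finally `Ψ[T(t,θ)] = T(f_α(t), βθ)`, and for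
`t ∈ [0,1]³` the matrix `T(t,θ)` is positive semidefinite exactly when its determinant
`1 - t₁² - t₂² - t₃² + 2 t₁ t₂ t₃ cos θ` is nonnegative.
-/

open Complex Matrix ComplexConjugate

theorem nonneg_of_esymm_nonneg {a b c : ℝ} (h1 : 0 ≤ a + b + c) (h2 : 0 ≤ a * b + b * c + c * a)
    (h3 : 0 ≤ a * b * c) : 0 ≤ a := by
  by_contra! ha
  nlinarith [sq_nonneg (b + c), mul_pos (neg_pos.2 ha) (neg_pos.2 ha)]

namespace Matrix.IsHermitian

variable {𝕜 n : Type*} [RCLike 𝕜] [Fintype n] [DecidableEq n] {A : Matrix n n 𝕜}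

theorem trace_mul_self_eq_sum_sq (hA : A.IsHermitian) :
    (A * A).trace = ∑ i, (hA.eigenvalues i : 𝕜) ^ 2 := by
  conv_lhs => rw [hA.spectral_theorem, ← map_mul, Unitary.conjStarAlgAut_apply, trace_mul_cycle,
    Unitary.coe_star_mul_self, one_mul, diagonal_mul_diagonal, trace_diagonal]
  simp [sq]

theorem posSemidef_of_fin_three {A : Matrix (Fin 3) (Fin 3) 𝕜} (hA : A.IsHermitian)
    (h1 : 0 ≤ RCLike.re A.trace) (h2 : RCLike.re (A * A).trace ≤ RCLike.re A.trace ^ 2)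
    (h3 : 0 ≤ RCLike.re A.det) : A.PosSemidef := by
  rw [hA.trace_eq_sum_eigenvalues] at h1 h2
  rw [hA.trace_mul_self_eq_sum_sq] at h2
  rw [hA.det_eq_prod_eigenvalues] at h3
  simp only [Fin.sum_univ_three, Fin.prod_univ_three, ← RCLike.ofReal_pow, ← RCLike.ofReal_add,
    ← RCLike.ofReal_mul, RCLike.ofReal_re] at h1 h2 h3
  set a := hA.eigenvalues 0
  set b := hA.eigenvalues 1
  set c := hA.eigenvalues 2
  -- `h2` says that the second elementary symmetric function of the eigenvalues is nonnegative.
  have h2' : 0 ≤ a * b + b * c + c * a := by nlinarith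
  refine hA.posSemidef_iff_eigenvalues_nonneg.2 fun i => ?_
  fin_cases i
  · exact nonneg_of_esymm_nonneg h1 h2' h3
  · change 0 ≤ b
    exact nonneg_of_esymm_nonneg (b := c) (c := a) (by linarith) (by linarith) (by linarith)
  · change 0 ≤ c
    exact nonneg_of_esymm_nonneg (b := a) (c := b) (by linarith) (by linarith) (by linarith)

end Matrix.IsHermitian

theorem Matrix.PosSemidef.norm_sq_apply_le {𝕜 n : Type*} [RCLike 𝕜] [Fintype n]
    {A : Matrix n n 𝕜} (hA : A.PosSemidef) (i j : n) :
    ‖A i j‖ ^ 2 ≤ RCLike.re (A i i) * RCLike.re (A j j) := by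
  have hdet := (hA.submatrix ![i, j]).det_nonneg
  rw [det_fin_two] at hdet
  simp only [submatrix_apply, Matrix.cons_val_zero, Matrix.cons_val_one] at hdet
  rw [← hA.isHermitian.apply j i, RCLike.star_def, RCLike.mul_conj, RCLike.nonneg_iff] at hdet
  have hi := RCLike.nonneg_iff.1 (hA.diag_nonneg (i := i))
  have hj := RCLike.nonneg_iff.1 (hA.diag_nonneg (i := j))
  simpa [RCLike.mul_re, hi.2, hj.2] using hdet.1

namespace Matrix.PosSemidef

variable {n : Type*} [Fintype n] {A : Matrix n n ℂ}

theorem apply_eq_zero_of_re_mul_re_eq_zero (hA : A.PosSemidef) {i j : n}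
    (h : (A i i).re * (A j j).re = 0) : A i j = 0 := by
  have hle := hA.norm_sq_apply_le i j
  rw [RCLike.re_to_complex, RCLike.re_to_complex, h] at hle
  exact norm_eq_zero.1 (pow_eq_zero_iff two_ne_zero |>.1 (le_antisymm hle (sq_nonneg _)))

theorem exists_diag_eq_one_congr [DecidableEq n] (hA : A.PosSemidef) :
    ∃ (s : n → ℝ) (C : Matrix n n ℂ), C.PosSemidef ∧ (∀ i, C i i = 1) ∧
      A = diagonal (fun i => (s i : ℂ)) * C * (diagonal (fun i => (s i : ℂ)))ᴴ := by
  set s : n → ℝ := fun i => √(A i i).re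
  have hre : ∀ i, (A i i).re = s i ^ 2 := fun i =>
    (Real.sq_sqrt (Complex.nonneg_iff.1 hA.diag_nonneg).1).symm
  have hdiag : ∀ i, A i i = s i * s i := fun i => by
    rw [← ofReal_mul, ← sq, ← hre]
    exact Complex.eq_re_of_ofReal_le (r := 0) (by simpa using hA.diag_nonneg)
  have hzero : ∀ i j, s i * s j = 0 → A i j = 0 := fun i j h =>
    hA.apply_eq_zero_of_re_mul_re_eq_zero (by rw [hre, hre, ← mul_pow, h, sq, zero_mul])
  -- Where `s i = 0` the junk value `(s i)⁻¹ = 0` kills row `i`, and the second summand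
  -- restores `C i i = 1`.
  refine ⟨s, diagonal (fun i => ((s i)⁻¹ : ℂ)) * A * (diagonal (fun i => ((s i)⁻¹ : ℂ)))ᴴ +
    diagonal (fun i => if s i = 0 then 1 else 0), ?_, ?_, ?_⟩
  · exact (hA.mul_mul_conjTranspose_same _).add
      (PosSemidef.diagonal fun i => by split_ifs <;> norm_num)
  · intro i
    by_cases hi : s i = 0 <;> simp [hi, hdiag]
  · ext i j
    simp only [diagonal_conjTranspose, add_apply, mul_diagonal, diagonal_mul, Pi.star_apply]
    by_cases hij : s i * s j = 0
    · rcases mul_eq_zero.1 hij with h | h <;> simp [hzero i j hij, h]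
    · obtain ⟨hi, hj⟩ := mul_ne_zero_iff.1 hij
      have hp : diagonal (fun i => if s i = 0 then (1 : ℂ) else 0) i j = 0 := by
        by_cases e : i = j <;> simp [e, hj]
      rw [hp, add_zero]
      simp only [RCLike.star_def, map_inv₀, conj_ofReal]
      field_simp

end Matrix.PosSemidef

section Psi

variable (α : ℝ) (β : ℤ)

theorem Psi_zero : Psi α β 0 = 0 := if_pos rfl

theorem Psi_of_ne_zero {z : ℂ} (hz : z ≠ 0) :
    Psi α β z = ((‖z‖ ^ α : ℝ) : ℂ) * (z / ‖z‖) ^ β := by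
  have hnorm : (‖z‖ : ℂ) ≠ 0 := by simpa using hz
  have hunit : z / ‖z‖ = exp (arg z * I) := by
    rw [div_eq_iff hnorm, mul_comm, norm_mul_exp_arg_mul_I]
  rw [Psi, if_neg hz, hunit, ← exp_int_mul]
  push_cast
  ring_nf

theorem Psi_mul (z w : ℂ) : Psi α β (z * w) = Psi α β z * Psi α β w := by
  rcases eq_or_ne z 0 with rfl | hz
  · simp [Psi_zero]
  rcases eq_or_ne w 0 with rfl | hw
  · simp [Psi_zero]
  rw [Psi_of_ne_zero α β hz, Psi_of_ne_zero α β hw, Psi_of_ne_zero α β (mul_ne_zero hz hw),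
    norm_mul, Real.mul_rpow (norm_nonneg z) (norm_nonneg w), ofReal_mul, ofReal_mul,
    mul_div_mul_comm, mul_zpow]
  ring

theorem Psi_conj (z : ℂ) : Psi α β (conj z) = conj (Psi α β z) := by
  rcases eq_or_ne z 0 with rfl | hz
  · simp [Psi_zero]
  rw [Psi_of_ne_zero α β hz, Psi_of_ne_zero α β ((map_ne_zero _).2 hz)]
  simp

theorem Psi_ofReal {t : ℝ} (ht : 0 ≤ t) : Psi α β t = fPow α t := by
  rcases ht.eq_or_lt with rfl | ht
  · simp [Psi_zero, fPow]
  rw [Psi_of_ne_zero α β (ofReal_ne_zero.2 ht.ne'), fPow, if_neg ht.ne', norm_real,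
    Real.norm_of_nonneg ht.le, div_self (ofReal_ne_zero.2 ht.ne'), _root_.one_zpow, mul_one]

theorem Psi_one : Psi α β 1 = 1 := by
  simpa [fPow] using Psi_ofReal α β zero_le_one

theorem Psi_exp_mul_I (φ : ℝ) : Psi α β (exp (φ * I)) = exp ((β * φ : ℝ) * I) := by
  rw [Psi_of_ne_zero α β (exp_ne_zero _), norm_exp_ofReal_mul_I, ofReal_one, div_one,
    ← exp_int_mul, Real.one_rpow, ofReal_one, one_mul]
  push_cast
  ring_nf

end Psi

theorem map_Psi_diagonal_mul_mul_conjTranspose {n : Type*} [Fintype n] [DecidableEq n]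
    (α : ℝ) (β : ℤ) (c : n → ℂ) (M : Matrix n n ℂ) :
    (diagonal c * M * (diagonal c)ᴴ).map (Psi α β) =
      diagonal (Psi α β ∘ c) * M.map (Psi α β) * (diagonal (Psi α β ∘ c))ᴴ := by
  ext i j
  simp [diagonal_conjTranspose, mul_diagonal, diagonal_mul, Psi_mul, Psi_conj]

theorem map_Psi_T3 (α : ℝ) (β : ℤ) {t1 t2 t3 : ℝ} (h1 : 0 ≤ t1) (h2 : 0 ≤ t2) (h3 : 0 ≤ t3)
    (θ : ℝ) : (T3 t1 t2 t3 θ).map (Psi α β) = T3 (fPow α t1) (fPow α t2) (fPow α t3) (β * θ) := by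
  have hexp_neg : Psi α β (exp (-(θ * I))) = exp (-((β * θ : ℝ) * I)) := by
    simpa [neg_mul] using Psi_exp_mul_I α β (-θ)
  ext i j
  fin_cases i <;> fin_cases j <;>
    simp [T3, Psi_one, Psi_ofReal, Psi_mul, h1, h2, h3, Psi_exp_mul_I, hexp_neg]

section T3

variable (t1 t2 t3 θ : ℝ)

theorem isHermitian_T3 : (T3 t1 t2 t3 θ).IsHermitian := by
  have h : conj (exp (θ * I)) = exp (-(θ * I)) := by rw [← exp_conj]; simp
  have h' : conj (exp (-(θ * I))) = exp (θ * I) := by rw [← exp_conj]; simp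
  ext i j
  fin_cases i <;> fin_cases j <;> simp [T3, h, h']

theorem re_trace_T3 : (T3 t1 t2 t3 θ).trace.re = 3 := by
  simp [T3, trace, Fin.sum_univ_three]
  norm_num

theorem re_trace_T3_mul_self :
    (T3 t1 t2 t3 θ * T3 t1 t2 t3 θ).trace.re = 3 + 2 * (t1 ^ 2 + t2 ^ 2 + t3 ^ 2) := by
  simp [T3, trace, Fin.sum_univ_three, exp_re, exp_im]
  nlinarith [Real.sin_sq_add_cos_sq θ]

theorem re_det_T3 :
    (T3 t1 t2 t3 θ).det.re = 1 - t1 ^ 2 - t2 ^ 2 - t3 ^ 2 + 2 * t1 * t2 * t3 * Real.cos θ := by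
  rw [det_fin_three]
  simp [T3, exp_re, exp_im]
  nlinarith [Real.sin_sq_add_cos_sq θ]

end T3

theorem posSemidef_T3_iff {t1 t2 t3 θ : ℝ} :
    (T3 t1 t2 t3 θ).PosSemidef ↔ t1 ^ 2 ≤ 1 ∧ t2 ^ 2 ≤ 1 ∧ t3 ^ 2 ≤ 1 ∧
      0 ≤ 1 - t1 ^ 2 - t2 ^ 2 - t3 ^ 2 + 2 * t1 * t2 * t3 * Real.cos θ := by
  constructor
  · intro hT
    have h := hT.norm_sq_apply_le
    refine ⟨by simpa [T3] using h 1 2, by simpa [T3] using h 0 2, by simpa [T3] using h 0 1, ?_⟩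
    rw [← re_det_T3]
    exact (Complex.nonneg_iff.1 hT.det_nonneg).1
  · rintro ⟨h1, h2, h3, hdet⟩
    refine (isHermitian_T3 ..).posSemidef_of_fin_three ?_ ?_ ?_ <;>
      simp only [RCLike.re_to_complex, re_trace_T3, re_trace_T3_mul_self, re_det_T3]
    · norm_num
    · linarith
    · exact hdet

theorem Matrix.IsHermitian.exists_eq_diagonal_mul_T3_mul {C : Matrix (Fin 3) (Fin 3) ℂ}
    (hC : C.IsHermitian) (hdiag : ∀ i, C i i = 1) :
    ∃ u : Fin 3 → ℂ, (∀ i, u i ≠ 0) ∧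
      C = diagonal u * T3 ‖C 1 2‖ ‖C 0 2‖ ‖C 0 1‖ (arg (C 0 2) - arg (C 0 1) - arg (C 1 2)) *
        (diagonal u)ᴴ := by
  -- Opaque names for moduli and phases keep `hupper` below from rewriting inside `‖C i j‖`.
  obtain ⟨r, hr⟩ : ∃ r : Fin 3 → Fin 3 → ℝ, ∀ i j, ‖C i j‖ = r i j := ⟨_, fun _ _ => rfl⟩
  obtain ⟨w, hw⟩ : ∃ w : Fin 3 → Fin 3 → ℂ, ∀ i j, cexp (arg (C i j) * I) = w i j :=
    ⟨_, fun _ _ => rfl⟩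
  have hw0 : ∀ i j, w i j ≠ 0 := fun i j => hw i j ▸ exp_ne_zero _
  have hw_conj : ∀ i j, conj (w i j) = (w i j)⁻¹ := fun i j => by
    rw [← hw, ← Complex.exp_conj, ← Complex.exp_neg]; simp
  have hupper : ∀ i j, C i j = r i j * w i j := fun i j => by
    rw [← hr, ← hw, norm_mul_exp_arg_mul_I]
  have hlower : ∀ i j, C j i = r i j * (w i j)⁻¹ := fun i j => by
    rw [← hC.apply j i, hupper, RCLike.star_def, map_mul, conj_ofReal, hw_conj]
  have hθ : cexp (((arg (C 0 2) - arg (C 0 1) - arg (C 1 2) : ℝ) : ℂ) * I) =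
      w 0 2 / (w 0 1 * w 1 2) := by
    push_cast; rw [sub_mul, sub_mul, exp_sub, exp_sub, div_div, hw, hw, hw]
  have hθ' : cexp (-((arg (C 0 2) - arg (C 0 1) - arg (C 1 2) : ℝ) : ℂ) * I) =
      (w 0 1 * w 1 2) / w 0 2 := by
    rw [neg_mul, Complex.exp_neg, hθ, inv_div]
  refine ⟨![1, (w 0 1)⁻¹, (w 0 1 * w 1 2)⁻¹], fun i => ?_, ?_⟩
  · fin_cases i <;> simp [hw0]
  · ext i j
    simp only [hr, T3, hθ, hθ', diagonal_conjTranspose, mul_diagonal, diagonal_mul]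
    fin_cases i <;> fin_cases j <;>
      simp [hdiag, hupper 0 1, hupper 0 2, hupper 1 2, hlower 0 1, hlower 0 2, hlower 1 2,
        hw_conj] <;>
      field_simp [hw0]

open Real in
theorem Matrix.PosSemidef.exists_eq_diagonal_mul_T3_mul {A : Matrix (Fin 3) (Fin 3) ℂ}
    (hA : A.PosSemidef) :
    ∃ (c : Fin 3 → ℂ) (t1 t2 t3 θ : ℝ), 0 ≤ t1 ∧ 0 ≤ t2 ∧ 0 ≤ t3 ∧
      θ ∈ Set.Ioo (-(3 * π)) (3 * π) ∧ (T3 t1 t2 t3 θ).PosSemidef ∧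
      A = diagonal c * T3 t1 t2 t3 θ * (diagonal c)ᴴ := by
  obtain ⟨s, C, hC, hCdiag, rfl⟩ := hA.exists_diag_eq_one_congr
  obtain ⟨u, hu, hCu⟩ := hC.isHermitian.exists_eq_diagonal_mul_T3_mul hCdiag
  have hU : IsUnit (diagonal u) := isUnit_diagonal.2 (Pi.isUnit_iff.2 fun i => (hu i).isUnit)
  refine ⟨fun i => s i * u i, _, _, _, arg (C 0 2) - arg (C 0 1) - arg (C 1 2),
    norm_nonneg (C 1 2), norm_nonneg (C 0 2), norm_nonneg (C 0 1), ⟨?_, ?_⟩, ?_, ?_⟩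
  · linarith [neg_pi_lt_arg (C 0 2), arg_le_pi (C 0 1), arg_le_pi (C 1 2)]
  · linarith [arg_le_pi (C 0 2), neg_pi_lt_arg (C 0 1), neg_pi_lt_arg (C 1 2)]
  · rw [hCu, ← star_eq_conjTranspose] at hC
    exact hU.posSemidef_star_right_conjugate_iff.1 hC
  · conv_lhs => rw [hCu]
    simp only [← diagonal_mul_diagonal, conjTranspose_mul, Matrix.mul_assoc]

open Real in
/-- Corollary: `Ψ_{α,β}` preserves positivity entrywise on 3×3 Hermitian positive
semidefinite matrices iff it does so on the matrices `T(t,θ)`. -/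
theorem Psi_preserves_iff_T3 (α : ℝ) (β : ℤ) :
    (∀ A : Matrix (Fin 3) (Fin 3) ℂ, A.PosSemidef →
      (A.map (Psi α (β : ℝ))).PosSemidef) ↔
    (∀ t1 t2 t3 θ : ℝ, t1 ∈ Set.Icc (0 : ℝ) 1 → t2 ∈ Set.Icc (0 : ℝ) 1 →
      t3 ∈ Set.Icc (0 : ℝ) 1 → θ ∈ Set.Ioo (-(3 * π)) (3 * π) →
      0 ≤ 1 - t1 ^ 2 - t2 ^ 2 - t3 ^ 2 + 2 * t1 * t2 * t3 * Real.cos θ →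
      (T3 (fPow α t1) (fPow α t2) (fPow α t3) ((β : ℝ) * θ)).PosSemidef) := by
  constructor
  · intro h t1 t2 t3 θ ⟨ht1, ht1'⟩ ⟨ht2, ht2'⟩ ⟨ht3, ht3'⟩ _ hdet
    rw [← map_Psi_T3 α β ht1 ht2 ht3]
    exact h _ (posSemidef_T3_iff.2 ⟨(sq_le_one_iff₀ ht1).2 ht1', (sq_le_one_iff₀ ht2).2 ht2',
      (sq_le_one_iff₀ ht3).2 ht3', hdet⟩)
  · intro h A hA
    obtain ⟨c, t1, t2, t3, θ, ht1, ht2, ht3, hθ, hT, rfl⟩ := hA.exists_eq_diagonal_mul_T3_mul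
    obtain ⟨ht1', ht2', ht3', hdet⟩ := posSemidef_T3_iff.1 hT
    rw [map_Psi_diagonal_mul_mul_conjTranspose, map_Psi_T3 α β ht1 ht2 ht3]
    exact (h t1 t2 t3 θ ⟨ht1, (sq_le_one_iff₀ ht1).1 ht1'⟩ ⟨ht2, (sq_le_one_iff₀ ht2).1 ht2'⟩
      ⟨ht3, (sq_le_one_iff₀ ht3).1 ht3'⟩ hθ hdet).mul_mul_conjTranspose_same _
end
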